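/- arXiv:2210.17371 — 5 statements merged into one kernel-verified Lean document; each statement's English description precedes it below -/
import Mathlib

section
/- Let η₁, η₂ be reals with η₁ > 4η₂ > 0, let ℓ > 0, and suppose m₁, …, m_r ∈ [0, η₂ℓ] satisfy m₁ + … + m_r ≥ η₁ℓ. If X₁, …, X_r are independent random variables such that each X_j takes only the values 0 and m_j and Pr[X_j = m_j] ≥ 1/2, then Pr[X₁ + … + X_r ≥ η₂ℓ] ≥ 1 − exp(−η₁/(8η₂)). -/
/-!
Each `X j` has mean at least `m j / 2`, so with `S = ∑ j, m j` the sum has mean at least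
`S / 2`, and the event `∑ j, X j < η₂ ℓ` is a downward deviation by `t ≥ S / 2 - η₂ ℓ ≥ S / 4`.
Hoeffding's inequality bounds its probability by `exp (-2 t² / ∑ j, m j ²)`, and since every
`m j ≤ η₂ ℓ` we have `∑ j, m j ² ≤ η₂ ℓ S`, so the exponent is at least
`S / (8 η₂ ℓ) ≥ η₁ / (8 η₂)`.
-/

open Finset

namespace TournamentPartition

/-! ### Basic constants from the paper -/

def rho : ℕ := 10 ^ 4
def sigma1 : ℕ := 10 ^ 60
def sigma2 : ℕ := 10 ^ 4
def sigma3 : ℕ := 10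

/-- `s` contains at least `m` elements satisfying `P`. -/
def ManyIn {α : Type*} (s : Finset α) (m : ℝ) (P : α → Prop) : Prop :=
  ∃ s' : Finset α, s' ⊆ s ∧ m ≤ (s'.card : ℝ) ∧ ∀ x ∈ s', P x

section Defs

variable {V I : Type*}

/-- `E u v` means that the edge between `u` and `v` is directed from `u` to `v`. -/
def IsTournament (E : V → V → Prop) : Prop :=
  (∀ v, ¬ E v v) ∧ ∀ u v : V, u ≠ v → (E u v ↔ ¬ E v u)

/-- There is a directed path from `u` to `v` all of whose vertices lie in `S`. -/
def ReachWithin (E : V → V → Prop) (S : Set V) (u v : V) : Prop :=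
  Relation.ReflTransGen (fun a b => a ∈ S ∧ b ∈ S ∧ E a b) u v

def StronglyConnectedOn (E : V → V → Prop) (S : Set V) : Prop :=
  ∀ u ∈ S, ∀ v ∈ S, ReachWithin E S u v

/-- A directed path, as a list of distinct vertices with consecutive edges. -/
def IsDiPath (E : V → V → Prop) (l : List V) : Prop :=
  l ≠ [] ∧ l.Nodup ∧ l.Chain' E

variable [Fintype V] [DecidableEq V]

/-- The set `S` induces a strongly `k`-connected subtournament. -/
def StronglyKConnectedOn (E : V → V → Prop) (k : ℕ) (S : Finset V) : Prop :=
  k + 1 ≤ S.card ∧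
    ∀ Z : Finset V, Z.card ≤ k → StronglyConnectedOn E ((S \ Z : Finset V) : Set V)

def StronglyKConnected (E : V → V → Prop) (k : ℕ) : Prop :=
  StronglyKConnectedOn E k Finset.univ

def outN (E : V → V → Prop) [DecidableRel E] (u : V) : Finset V :=
  Finset.univ.filter fun v => E u v

def inN (E : V → V → Prop) [DecidableRel E] (u : V) : Finset V :=
  Finset.univ.filter fun v => E v u

/-- A system of gadgets `U(α)` with special sets `S⁺(α), S⁻(α) ⊆ S(α) ⊆ U(α)`,
exceptional sets `X(α)` and special vertices `s⁺(α), s⁻(α) ∈ S(α)`. -/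
structure GadgetSystem (V I : Type*) where
  U : I → Finset V
  S : I → Finset V
  Sp : I → Finset V
  Sm : I → Finset V
  X : I → Finset V
  sp : I → V
  sm : I → V
  sp_mem : ∀ α, sp α ∈ S α
  sm_mem : ∀ α, sm α ∈ S α
  Sp_subset : ∀ α, Sp α ⊆ S α
  Sm_subset : ∀ α, Sm α ⊆ S α
  S_subset : ∀ α, S α ⊆ U α

variable [Fintype I] [DecidableEq I]

def Vokay (G : GadgetSystem V I) : Finset V :=
  Finset.univ \ Finset.univ.biUnion G.S

/-- Vertices of `V_okay` having no out-neighbour in `S⁻(α)` for at least `k*t` indices `α`. -/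
def VbadP (E : V → V → Prop) [DecidableRel E] (G : GadgetSystem V I) (k t : ℕ) : Finset V :=
  (Vokay G).filter fun u =>
    k * t ≤ (Finset.univ.filter fun α : I => ∀ v ∈ G.Sm α, ¬ E u v).card

/-- Vertices of `V_okay` having no in-neighbour in `S⁺(α)` for at least `k*t` indices `α`. -/
def VbadM (E : V → V → Prop) [DecidableRel E] (G : GadgetSystem V I) (k t : ℕ) : Finset V :=
  (Vokay G).filter fun u =>
    k * t ≤ (Finset.univ.filter fun α : I => ∀ v ∈ G.Sp α, ¬ E v u).card

def Vbad (E : V → V → Prop) [DecidableRel E] (G : GadgetSystem V I) (k t : ℕ) : Finset V :=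
  VbadP E G k t ∩ VbadM E G k t

def VgoodP (E : V → V → Prop) [DecidableRel E] (G : GadgetSystem V I) (k t : ℕ) : Finset V :=
  Vokay G \ VbadP E G k t

def VgoodM (E : V → V → Prop) [DecidableRel E] (G : GadgetSystem V I) (k t : ℕ) : Finset V :=
  Vokay G \ VbadM E G k t

def Vgood (E : V → V → Prop) [DecidableRel E] (G : GadgetSystem V I) (k t : ℕ) : Finset V :=
  VgoodP E G k t ∩ VgoodM E G k t

/-- `W(C) = V ∖ ⋃_{α ∈ C} U(α)`. -/
def Wof (G : GadgetSystem V I) (C : Finset I) : Finset V :=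
  Finset.univ \ C.biUnion G.U

def NokayP (E : V → V → Prop) [DecidableRel E] (G : GadgetSystem V I) (u : V) : Finset V :=
  outN E u ∩ Vokay G

def NokayM (E : V → V → Prop) [DecidableRel E] (G : GadgetSystem V I) (u : V) : Finset V :=
  inN E u ∩ Vokay G

def NgoodP (E : V → V → Prop) [DecidableRel E] (G : GadgetSystem V I) (k t : ℕ) (u : V) :
    Finset V :=
  outN E u ∩ VgoodP E G k t

def NgoodM (E : V → V → Prop) [DecidableRel E] (G : GadgetSystem V I) (k t : ℕ) (u : V) :
    Finset V :=
  inN E u ∩ Vgood E G k t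

/-! ### Properties (G1)–(G9) -/

def CondG1 (G : GadgetSystem V I) : Prop :=
  ∀ α β : I, α ≠ β → Disjoint (G.U α) (G.U β)

def CondG2 (G : GadgetSystem V I) (k t : ℕ) : Prop :=
  ∀ α : I, (G.S α).card ≤ rho ∧ (G.X α).card ≤ rho * sigma1 * k * t

def CondG3 (E : V → V → Prop) (G : GadgetSystem V I) : Prop :=
  ∀ α : I, ∀ u ∈ G.Sm α, ∀ v ∈ G.Sp α, ReachWithin E (G.U α : Set V) u v

def CondG4 (E : V → V → Prop) (G : GadgetSystem V I) : Prop :=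
  ∀ α : I, ∀ x : V, x ∉ G.X α →
    (E x (G.sp α) → ∀ u ∈ G.U α \ G.S α, E x u) ∧
    (E (G.sm α) x → ∀ u ∈ G.U α \ G.S α, E u x)

def CondG5 (E : V → V → Prop) [DecidableRel E] (G : GadgetSystem V I) (k t : ℕ) : Prop :=
  ∀ u ∈ Vokay G,
    10 ^ 12 * (VbadP E G k t).card ≤ (outN E u).card ∧
    10 ^ 12 * (VbadM E G k t).card ≤ (inN E u).card

/-- Properties (G1)–(G5) of a gadget system. -/
def GadgetHyp (E : V → V → Prop) [DecidableRel E] (G : GadgetSystem V I) (k t : ℕ) : Prop :=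
  CondG1 G ∧ CondG2 G k t ∧ CondG3 E G ∧ CondG4 E G ∧ CondG5 E G k t

def CondG6 (E : V → V → Prop) [DecidableRel E] (G : GadgetSystem V I) (k t : ℕ) : Prop :=
  (Fintype.card V : ℝ) / 2 ≤ ((Vgood E G k t).card : ℝ)

def CondG7 (E : V → V → Prop) [DecidableRel E] (G : GadgetSystem V I) (k t τ₁ : ℕ) : Prop :=
  ∀ u ∈ Vokay G,
    max ((10 : ℝ) ^ 11 * ((VbadP E G k t).card : ℝ)) (((τ₁ * k * t : ℕ) : ℝ) / 2)
      ≤ ((outN E u ∩ VgoodP E G k t).card : ℝ)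

def CondG8 (E : V → V → Prop) [DecidableRel E] (G : GadgetSystem V I) (k t τ₁ : ℕ) : Prop :=
  ∀ u ∈ Vokay G,
    max ((10 : ℝ) ^ 11 * ((VbadM E G k t).card : ℝ)) (((τ₁ * k * t : ℕ) : ℝ) / 2)
      ≤ ((inN E u ∩ Vgood E G k t).card : ℝ)

def CondG9 (E : V → V → Prop) [DecidableRel E] (G : GadgetSystem V I) (k t τ₁ : ℕ) : Prop :=
  ∀ u : V,
    max ((10 : ℝ) ^ 11 * (((Finset.univ \ Vokay G).card : ℕ) : ℝ)) (((τ₁ * k * t : ℕ) : ℝ) / 2)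
      ≤ ((outN E u ∩ Vokay G).card : ℝ) ∧
    max ((10 : ℝ) ^ 11 * (((Finset.univ \ Vokay G).card : ℕ) : ℝ)) (((τ₁ * k * t : ℕ) : ℝ) / 2)
      ≤ ((inN E u ∩ Vokay G).card : ℝ)

/-- Properties (G6)–(G9) of a gadget system. -/
def GadgetHyp2 (E : V → V → Prop) [DecidableRel E] (G : GadgetSystem V I) (k t τ₁ : ℕ) :
    Prop :=
  CondG6 E G k t ∧ CondG7 E G k t τ₁ ∧ CondG8 E G k t τ₁ ∧ CondG9 E G k t τ₁

/-! ### Available vertices -/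

def AvailA1 (E : V → V → Prop) [DecidableRel E] (G : GadgetSystem V I) (k t : ℕ)
    (W : Finset V) (u : V) : Prop :=
  u ∈ Vgood E G k t ∩ W

def AvailA2 (E : V → V → Prop) [DecidableRel E] (G : GadgetSystem V I) (k t τ₂ : ℕ)
    (W : Finset V) (u : V) : Prop :=
  u ∈ (VgoodP E G k t \ VgoodM E G k t) ∩ W ∧
    ManyIn (inN E u) ((τ₂ * k * t : ℕ) : ℝ) (AvailA1 E G k t W)

def AvailA3 (E : V → V → Prop) [DecidableRel E] (G : GadgetSystem V I) (k t τ₂ : ℕ)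
    (W : Finset V) (u : V) : Prop :=
  u ∈ (VgoodM E G k t \ VgoodP E G k t) ∩ W ∧
    ManyIn (outN E u) ((τ₂ * k * t : ℕ) : ℝ)
      (fun v => AvailA1 E G k t W v ∨ AvailA2 E G k t τ₂ W v)

def AvailA4 (E : V → V → Prop) [DecidableRel E] (G : GadgetSystem V I) (k t τ₂ : ℕ)
    (W : Finset V) (u : V) : Prop :=
  u ∈ Vbad E G k t ∩ W ∧
    ManyIn (outN E u) ((τ₂ * k * t : ℕ) : ℝ)
      (fun v => AvailA1 E G k t W v ∨ AvailA2 E G k t τ₂ W v) ∧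
    ManyIn (inN E u) ((τ₂ * k * t : ℕ) : ℝ) (AvailA1 E G k t W)

/-- `u` is available (for `α`) with respect to a family `𝒜`, where `W = W(𝒜 ∖ {α})`. -/
def Available (E : V → V → Prop) [DecidableRel E] (G : GadgetSystem V I) (k t τ₂ : ℕ)
    (W : Finset V) (u : V) : Prop :=
  AvailA1 E G k t W u ∨ AvailA2 E G k t τ₂ W u ∨ AvailA3 E G k t τ₂ W u ∨
    AvailA4 E G k t τ₂ W u

/-! ### Eligible and helpful vertices -/

/-- Indices `α ∈ 𝒜` such that `u` has no out-neighbour in `S⁻(α)`. -/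
def MissOut (E : V → V → Prop) [DecidableRel E] (G : GadgetSystem V I) (𝒜 : Finset I)
    (u : V) : Finset I :=
  𝒜.filter fun α => ∀ v ∈ G.Sm α, ¬ E u v

/-- Indices `α ∈ 𝒜` such that `u` has no in-neighbour in `S⁺(α)`. -/
def MissIn (E : V → V → Prop) [DecidableRel E] (G : GadgetSystem V I) (𝒜 : Finset I)
    (u : V) : Finset I :=
  𝒜.filter fun α => ∀ v ∈ G.Sp α, ¬ E v u

def Nice1 (E : V → V → Prop) [DecidableRel E] (G : GadgetSystem V I) (k t : ℕ)
    (𝒜 : Finset I) (W : Finset V) (u : V) : Prop :=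
  u ∈ Vgood E G k t ∩ W ∧ (MissOut E G 𝒜 u).card ≤ k ∧ (MissIn E G 𝒜 u).card ≤ k

def Nice2 (E : V → V → Prop) [DecidableRel E] (G : GadgetSystem V I) (k t : ℕ) (m : ℝ)
    (𝒜 : Finset I) (W : Finset V) (u : V) : Prop :=
  u ∈ (VgoodP E G k t \ VgoodM E G k t) ∩ W ∧ (MissOut E G 𝒜 u).card ≤ k ∧
    ManyIn (inN E u) m (Nice1 E G k t 𝒜 W)

def Nice3 (E : V → V → Prop) [DecidableRel E] (G : GadgetSystem V I) (k t : ℕ) (m : ℝ)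
    (𝒜 : Finset I) (W : Finset V) (u : V) : Prop :=
  u ∈ (VgoodM E G k t \ VgoodP E G k t) ∩ W ∧ (MissIn E G 𝒜 u).card ≤ k ∧
    ManyIn (outN E u) m (fun v => Nice1 E G k t 𝒜 W v ∨ Nice2 E G k t m 𝒜 W v)

def Nice4 (E : V → V → Prop) [DecidableRel E] (G : GadgetSystem V I) (k t : ℕ) (m : ℝ)
    (𝒜 : Finset I) (W : Finset V) (u : V) : Prop :=
  u ∈ Vbad E G k t ∩ W ∧
    ManyIn (inN E u) m (Nice1 E G k t 𝒜 W) ∧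
    ManyIn (outN E u) m (fun v => Nice1 E G k t 𝒜 W v ∨ Nice2 E G k t m 𝒜 W v)

def NiceFor (E : V → V → Prop) [DecidableRel E] (G : GadgetSystem V I) (k t : ℕ) (m : ℝ)
    (𝒜 : Finset I) (W : Finset V) (u : V) : Prop :=
  Nice1 E G k t 𝒜 W u ∨ Nice2 E G k t m 𝒜 W u ∨ Nice3 E G k t m 𝒜 W u ∨
    Nice4 E G k t m 𝒜 W u

/-- `u` is eligible for `𝒜` in `W`. -/
def Eligible (E : V → V → Prop) [DecidableRel E] (G : GadgetSystem V I) (k t τ₃ : ℕ)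
    (𝒜 : Finset I) (W : Finset V) (u : V) : Prop :=
  NiceFor E G k t ((τ₃ * k * t : ℕ) : ℝ) 𝒜 W u

/-- `u` is helpful for `𝒜` in `W`. -/
def Helpful (E : V → V → Prop) [DecidableRel E] (G : GadgetSystem V I) (k t : ℕ)
    (𝒜 : Finset I) (W : Finset V) (u : V) : Prop :=
  NiceFor E G k t (k : ℝ) 𝒜 W u

end Defs

noncomputable def phi0 (τ₁ : ℕ) : ℝ := (τ₁ : ℝ) / 4
noncomputable def phi1 (τ₁ : ℕ) : ℝ := phi0 τ₁ / (2 ^ 6 * (rho : ℝ))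
noncomputable def phi2 (τ₁ : ℕ) : ℝ := phi1 τ₁ / (2 ^ 14 * (rho : ℝ) ^ 2)
noncomputable def phi3 (τ₁ : ℕ) : ℝ := phi2 τ₁ / (2 ^ 14 * (rho : ℝ) ^ 2)

open MeasureTheory ProbabilityTheory Real

section

variable {Ω : Type*} [MeasurableSpace Ω] {μ : Measure Ω}

lemma integral_eq_measureReal_mul_of_eq_zero_or_eq {Y : Ω → ℝ} {c : ℝ} (hY : Measurable Y)
    (hval : ∀ ω, Y ω = 0 ∨ Y ω = c) : μ[Y] = μ.real {ω | Y ω = c} * c := by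
  have hind : Y = {ω | Y ω = c}.indicator fun _ ↦ c := by
    funext ω
    by_cases h : Y ω = c
    · simp [h]
    · simp [Set.indicator_of_notMem (show ω ∉ {ω | Y ω = c} from h), (hval ω).resolve_right h]
  calc μ[Y] = ∫ ω, {ω | Y ω = c}.indicator (fun _ ↦ c) ω ∂μ := by rw [← hind]
    _ = μ.real {ω | Y ω = c} * c :=
      integral_indicator_const c (hY (measurableSet_singleton c))

lemma half_le_integral_of_eq_zero_or_eq [IsFiniteMeasure μ] {Y : Ω → ℝ} {c : ℝ} (hc : 0 ≤ c)
    (hY : Measurable Y) (hval : ∀ ω, Y ω = 0 ∨ Y ω = c) (hp : 1 / 2 ≤ μ {ω | Y ω = c}) :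
    c / 2 ≤ μ[Y] := by
  have hp' : 1 / 2 ≤ μ.real {ω | Y ω = c} := by
    simpa [measureReal_def] using ENNReal.toReal_mono (measure_ne_top μ _) hp
  rw [integral_eq_measureReal_mul_of_eq_zero_or_eq hY hval]
  nlinarith

lemma hasSubgaussianMGF_integral_sub_of_mem_Icc [IsProbabilityMeasure μ] {Y : Ω → ℝ} {a b : ℝ}
    (hY : Measurable Y) (hb : ∀ ω, Y ω ∈ Set.Icc a b) :
    HasSubgaussianMGF (fun ω ↦ μ[Y] - Y ω) ((‖b - a‖₊ / 2) ^ 2) μ := by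
  convert (hasSubgaussianMGF_of_mem_Icc hY.aemeasurable (ae_of_all μ hb)).neg using 1
  funext ω
  simp

lemma measureReal_sum_le_sum_integral_sub_le [IsProbabilityMeasure μ] {ι : Type*}
    [Fintype ι] {X : ι → Ω → ℝ} (hind : iIndepFun X μ) (hmeas : ∀ i, Measurable (X i))
    {a b : ι → ℝ} (hX : ∀ i, ∀ ω, X i ω ∈ Set.Icc (a i) (b i)) {t : ℝ} (ht : 0 ≤ t) :
    μ.real {ω | ∑ i, X i ω ≤ ∑ i, μ[X i] - t}
      ≤ exp (-2 * t ^ 2 / ∑ i, (b i - a i) ^ 2) := by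
  have hY : iIndepFun (fun i ω ↦ μ[X i] - X i ω) μ :=
    hind.comp (fun i (x : ℝ) ↦ (∫ ω, X i ω ∂μ) - x) fun _ ↦ measurable_const.sub measurable_id
  have := HasSubgaussianMGF.measure_sum_ge_le_of_iIndepFun hY (s := Finset.univ)
    (fun i _ ↦ hasSubgaussianMGF_integral_sub_of_mem_Icc (hmeas i) (hX i)) ht
  convert this using 2
  · ext ω
    simp only [Set.mem_ofPred_eq, Finset.sum_sub_distrib]
    constructor <;> intro h <;> linarith
  · push_cast
    simp only [div_pow, Real.norm_eq_abs, sq_abs, ← Finset.sum_div]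
    ring

lemma measureReal_sum_le_le_exp_of_eq_zero_or_eq [IsProbabilityMeasure μ] {ι : Type*}
    [Fintype ι] {X : ι → Ω → ℝ} (hind : iIndepFun X μ) (hmeas : ∀ i, Measurable (X i))
    {m : ι → ℝ} {M : ℝ} (hm0 : ∀ i, 0 ≤ m i) (hmM : ∀ i, m i ≤ M)
    (hval : ∀ i ω, X i ω = 0 ∨ X i ω = m i) (hp : ∀ i, 1 / 2 ≤ μ {ω | X i ω = m i})
    (hM : 0 < M) (hMS : 4 * M ≤ ∑ i, m i) :
    μ.real {ω | ∑ i, X i ω ≤ M} ≤ exp (-(∑ i, m i) / (8 * M)) := by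
  set S := ∑ i, m i
  set t := ∑ i, μ[X i] - M
  have hmean : S / 2 ≤ ∑ i, μ[X i] := by
    rw [Finset.sum_div]
    exact sum_le_sum fun i _ ↦
      half_le_integral_of_eq_zero_or_eq (hm0 i) (hmeas i) (hval i) (hp i)
  have ht : S / 4 ≤ t := by linarith
  have hsq : ∑ i, m i ^ 2 ≤ M * S := by
    rw [Finset.mul_sum]
    exact Finset.sum_le_sum fun i _ ↦ by nlinarith [hm0 i, hmM i]
  have hsq_pos : 0 < ∑ i, m i ^ 2 := by
    obtain ⟨i, -, hi⟩ := exists_lt_of_sum_lt (show ∑ i, (0 : ℝ) < S by simp; linarith)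
    exact sum_pos' (fun i _ ↦ sq_nonneg _) ⟨i, mem_univ i, pow_pos hi 2⟩
  have hIcc : ∀ i ω, X i ω ∈ Set.Icc 0 (m i) := fun i ω ↦ by
    rcases hval i ω with h | h <;> simp [h, hm0 i]
  calc μ.real {ω | ∑ i, X i ω ≤ M} = μ.real {ω | ∑ i, X i ω ≤ ∑ i, μ[X i] - t} := by
        simp only [t, sub_sub_cancel]
    _ ≤ exp (-2 * t ^ 2 / ∑ i, m i ^ 2) := by
        have := measureReal_sum_le_sum_integral_sub_le (a := 0) (t := t) hind hmeas hIcc (by linarith)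
        simpa only [Pi.zero_apply, sub_zero] using this
    _ ≤ exp (-S / (8 * M)) := by
        refine exp_le_exp.2 ?_
        rw [neg_mul, neg_div, neg_div, neg_le_neg_iff, div_le_div_iff₀ (by positivity) hsq_pos]
        have hS : 0 ≤ S := by linarith
        nlinarith [mul_le_mul_of_nonneg_left hsq hS,
          mul_le_mul_of_nonneg_left (pow_le_pow_left₀ (by linarith) ht 2) hM.le]

lemma ofReal_one_sub_le_measure_of_measureReal_compl_le [IsProbabilityMeasure μ] {s : Set Ω}
    {p : ℝ} (h : μ.real sᶜ ≤ p) : ENNReal.ofReal (1 - p) ≤ μ s := by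
  rw [ENNReal.ofReal_le_iff_le_toReal (measure_ne_top μ s)]
  have := measureReal_union_le (μ := μ) s sᶜ
  rw [Set.union_compl_self, probReal_univ] at this
  rw [← measureReal_def]
  linarith

end

/-- Proposition 3.1, a corollary of Hoeffding's inequality. -/
theorem statement1 {Ω : Type*} [MeasurableSpace Ω] (μ : MeasureTheory.Measure Ω)
    [MeasureTheory.IsProbabilityMeasure μ]
    (η₁ η₂ ℓ : ℝ) (hη : 4 * η₂ < η₁) (hη₂ : 0 < η₂) (hℓ : 0 < ℓ)
    (r : ℕ) (m : Fin r → ℝ) (hm0 : ∀ j, 0 ≤ m j) (hm1 : ∀ j, m j ≤ η₂ * ℓ)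
    (hsum : η₁ * ℓ ≤ ∑ j, m j)
    (X : Fin r → Ω → ℝ) (hXmeas : ∀ j, Measurable (X j))
    (hXval : ∀ j ω, X j ω = 0 ∨ X j ω = m j)
    (hXind : ProbabilityTheory.iIndepFun X μ)
    (hXprob : ∀ j, (1 : ENNReal) / 2 ≤ μ {ω | X j ω = m j}) :
    ENNReal.ofReal (1 - Real.exp (-η₁ / (8 * η₂))) ≤ μ {ω | η₂ * ℓ ≤ ∑ j, X j ω} := by
  have hε : 0 < η₂ * ℓ := by positivity
  have htail := measureReal_sum_le_le_exp_of_eq_zero_or_eq hXind hXmeas hm0 hm1 hXval hXprob hε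
    (by nlinarith)
  refine ofReal_one_sub_le_measure_of_measureReal_compl_le ?_
  calc μ.real {ω | η₂ * ℓ ≤ ∑ j, X j ω}ᶜ ≤ μ.real {ω | ∑ j, X j ω ≤ η₂ * ℓ} :=
        measureReal_mono fun ω hω ↦ by
          simp only [Set.mem_compl_iff, Set.mem_ofPred_eq, not_le] at hω ⊢; exact hω.le
    _ ≤ exp (-(∑ j, m j) / (8 * (η₂ * ℓ))) := htail
    _ ≤ exp (-η₁ / (8 * η₂)) := by
        refine exp_le_exp.2 ?_
        rw [neg_div, neg_div, neg_le_neg_iff, div_le_div_iff₀ (by positivity) (by positivity)]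
        nlinarith

end TournamentPartition
end

section
/- Let T, the constants, and a gadget system be as in the context, and assume |V_bad⁻| ≥ |V_bad⁺|. Then: (G6) |V_good| ≥ n/2; (G7) every vertex of V_okay has at least max{10^11·|V_bad⁺|, τ₁kt/2} out-neighbours in V_good⁺; (G8) every vertex of V_okay has at least max{10^11·|V_bad⁻|, τ₁kt/2} in-neighbours in V_good; (G9) every vertex of V has at least max{10^11·|V ∖ V_okay|, τ₁kt/2} out-neighbours in V_okay and at least max{10^11·|V ∖ V_okay|, τ₁kt/2} in-neighbours in V_okay. -/
open Finset

namespace TournamentPartition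

section Aux

variable {V : Type*} [Fintype V] [DecidableEq V]

lemma mindeg_out (E : V → V → Prop) [DecidableRel E]
    (hT : IsTournament E) (κ : ℕ) (h : StronglyKConnected E κ) (u : V) :
    κ ≤ (outN E u).card := by
  by_contra hlt
  push_neg at hlt
  have hsc := h.2 (outN E u) (le_of_lt hlt)
  have hcard2 : 2 ≤ (Finset.univ \ outN E u).card := by
    have h1 := h.1
    have h2 : (Finset.univ \ outN E u).card = Finset.univ.card - (outN E u).card :=
      Finset.card_sdiff_of_subset (Finset.subset_univ _)
    omega
  obtain ⟨v, hv, hvne⟩ :=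
    Finset.exists_mem_ne (by omega : 1 < (Finset.univ \ outN E u).card) u
  have hu : u ∈ Finset.univ \ outN E u := by
    simp [outN, hT.1 u]
  have hreach := hsc u (Finset.mem_coe.mpr hu) v (Finset.mem_coe.mpr hv)
  rcases hreach.cases_head with heq | ⟨c, ⟨_, hc, hEuc⟩, _⟩
  · exact hvne heq.symm
  · rw [Finset.mem_coe, Finset.mem_sdiff] at hc
    exact hc.2 (by simp [outN, hEuc])

lemma mindeg_in (E : V → V → Prop) [DecidableRel E]
    (hT : IsTournament E) (κ : ℕ) (h : StronglyKConnected E κ) (u : V) :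
    κ ≤ (inN E u).card := by
  by_contra hlt
  push_neg at hlt
  have hsc := h.2 (inN E u) (le_of_lt hlt)
  have hcard2 : 2 ≤ (Finset.univ \ inN E u).card := by
    have h1 := h.1
    have h2 : (Finset.univ \ inN E u).card = Finset.univ.card - (inN E u).card :=
      Finset.card_sdiff_of_subset (Finset.subset_univ _)
    omega
  obtain ⟨v, hv, hvne⟩ :=
    Finset.exists_mem_ne (by omega : 1 < (Finset.univ \ inN E u).card) u
  have hu : u ∈ Finset.univ \ inN E u := by
    simp [inN, hT.1 u]
  have hreach := hsc v (Finset.mem_coe.mpr hv) u (Finset.mem_coe.mpr hu)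
  rcases hreach.cases_tail with heq | ⟨c, _, ⟨hc, _, hEcu⟩⟩
  · exact hvne heq.symm
  · rw [Finset.mem_coe, Finset.mem_sdiff] at hc
    exact hc.2 (by simp [inN, hEcu])

omit [Fintype V] in
lemma card_inter_lower (N Good Rest : Finset V)
    (h : ∀ v ∈ N, v ∈ Good ∨ v ∈ Rest) :
    N.card ≤ (N ∩ Good).card + Rest.card := by
  have hsub : N ⊆ (N ∩ Good) ∪ Rest := by
    intro v hv
    rcases h v hv with h1 | h2
    · exact Finset.mem_union_left _ (Finset.mem_inter.mpr ⟨hv, h1⟩)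
    · exact Finset.mem_union_right _ h2
  exact (Finset.card_le_card hsub).trans (Finset.card_union_le _ _)

end Aux

/-- Claim 4.4: properties (G6)–(G9), assuming `|V_bad⁻| ≥ |V_bad⁺|`. -/
theorem statement5 :
    ∃ C : ℕ, ∀ (τ₁ k t : ℕ), C ≤ τ₁ → C * τ₁ ≤ k → 2 ≤ t →
      ∀ (V : Type) [Fintype V] [DecidableEq V] (E : V → V → Prop) [DecidableRel E],
        IsTournament E → StronglyKConnected E (τ₁ * k * t) →
        ∀ G : GadgetSystem V (Fin (sigma1 * k * t)), GadgetHyp E G k t →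
          (VbadP E G k t).card ≤ (VbadM E G k t).card →
          GadgetHyp2 E G k t τ₁ := by
  refine ⟨10 ^ 80, ?_⟩
  intro τ₁ k t hC _hCk _ht V _ _ E _ hT hcon G hG hbb
  obtain ⟨_hG1, hG2, _hG3, _hG4, hG5⟩ := hG
  have hn1 : τ₁ * k * t + 1 ≤ Fintype.card V := by
    have h := hcon.1; rwa [Finset.card_univ] at h
  have hdo : ∀ u : V, τ₁ * k * t ≤ (outN E u).card := mindeg_out E hT _ hcon
  have hdi : ∀ u : V, τ₁ * k * t ≤ (inN E u).card := mindeg_in E hT _ hcon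
  -- bounding |V \ V_okay|
  have hsub : (Finset.univ \ Vokay G : Finset V) ⊆ Finset.univ.biUnion G.S := by
    intro x hx
    simp only [Vokay, Finset.mem_sdiff, Finset.mem_univ, true_and, not_not] at hx
    exact hx
  have hscard : (Finset.univ \ Vokay G : Finset V).card ≤ sigma1 * k * t * rho := by
    calc (Finset.univ \ Vokay G : Finset V).card
        ≤ (Finset.univ.biUnion G.S).card := Finset.card_le_card hsub
      _ ≤ ∑ α, (G.S α).card := Finset.card_biUnion_le
      _ ≤ Finset.univ.card • rho := Finset.sum_le_card_nsmul _ _ _ (fun α _ => (hG2 α).1)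
      _ = sigma1 * k * t * rho := by simp [Finset.card_univ]
  have hKbig : sigma1 * k * t * rho * 10 ^ 16 ≤ τ₁ * k * t := by
    have he : sigma1 * k * t * rho * 10 ^ 16 = (10 ^ 80) * k * t := by
      unfold sigma1 rho; ring
    rw [he]
    gcongr
  have hsK : (Finset.univ \ Vokay G : Finset V).card * 10 ^ 16 ≤ τ₁ * k * t :=
    le_trans (Nat.mul_le_mul_right _ hscard) hKbig
  -- V_okay is nonempty, hence (G5) bounds the bad sets globally
  have hVeq : (Finset.univ \ Vokay G : Finset V).card + (Vokay G).card = Fintype.card V := by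
    rw [Finset.card_sdiff_add_card_eq_card (Finset.subset_univ _), Finset.card_univ]
  have hok : 0 < (Vokay G).card := by omega
  obtain ⟨u₀, hu₀⟩ := Finset.card_pos.mp hok
  have hbP : 10 ^ 12 * (VbadP E G k t).card ≤ Fintype.card V :=
    (hG5 u₀ hu₀).1.trans ((Finset.card_le_univ _).trans_eq Finset.card_univ)
  have hbM : 10 ^ 12 * (VbadM E G k t).card ≤ Fintype.card V :=
    (hG5 u₀ hu₀).2.trans ((Finset.card_le_univ _).trans_eq Finset.card_univ)
  -- real-valued versions of all the facts
  have hsKR : ((Finset.univ \ Vokay G : Finset V).card : ℝ) * 10 ^ 16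
      ≤ ((τ₁ * k * t : ℕ) : ℝ) := by exact_mod_cast hsK
  have hnR : ((τ₁ * k * t : ℕ) : ℝ) + 1 ≤ (Fintype.card V : ℝ) := by exact_mod_cast hn1
  have hbPR : (10 : ℝ) ^ 12 * ((VbadP E G k t).card : ℝ) ≤ (Fintype.card V : ℝ) := by
    exact_mod_cast hbP
  have hbMR : (10 : ℝ) ^ 12 * ((VbadM E G k t).card : ℝ) ≤ (Fintype.card V : ℝ) := by
    exact_mod_cast hbM
  have hbbR : ((VbadP E G k t).card : ℝ) ≤ ((VbadM E G k t).card : ℝ) := by exact_mod_cast hbb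
  have hK0 : (0 : ℝ) ≤ ((τ₁ * k * t : ℕ) : ℝ) := Nat.cast_nonneg _
  refine ⟨?_, ?_, ?_, ?_⟩
  · -- (G6)
    have hcover : ∀ v ∈ (Finset.univ : Finset V), v ∈ Vgood E G k t ∨
        v ∈ VbadP E G k t ∪ (VbadM E G k t ∪ (Finset.univ \ Vokay G)) := by
      intro v _
      by_cases hvo : v ∈ Vokay G
      · by_cases hp : v ∈ VbadP E G k t
        · right; exact Finset.mem_union_left _ hp
        · by_cases hm : v ∈ VbadM E G k t
          · right; exact Finset.mem_union_right _ (Finset.mem_union_left _ hm)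
          · left
            simp [Vgood, VgoodP, VgoodM, Finset.mem_inter, Finset.mem_sdiff, hvo, hp, hm]
      · right; simp [Finset.mem_union, Finset.mem_sdiff, hvo]
    have h1 : Fintype.card V ≤ (Vgood E G k t).card + ((VbadP E G k t).card +
        ((VbadM E G k t).card + (Finset.univ \ Vokay G : Finset V).card)) := by
      have h0 := card_inter_lower (Finset.univ : Finset V) (Vgood E G k t) _ hcover
      rw [Finset.univ_inter, Finset.card_univ] at h0
      refine h0.trans (Nat.add_le_add_left ?_ _)
      exact (Finset.card_union_le _ _).trans (Nat.add_le_add_left (Finset.card_union_le _ _) _)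
    have h1R : (Fintype.card V : ℝ) ≤ ((Vgood E G k t).card : ℝ) +
        (((VbadP E G k t).card : ℝ) + (((VbadM E G k t).card : ℝ) +
        ((Finset.univ \ Vokay G : Finset V).card : ℝ))) := by exact_mod_cast h1
    show (Fintype.card V : ℝ) / 2 ≤ ((Vgood E G k t).card : ℝ)
    linarith
  · -- (G7)
    intro u hu
    have hcover : ∀ v ∈ outN E u, v ∈ VgoodP E G k t ∨
        v ∈ VbadP E G k t ∪ (Finset.univ \ Vokay G) := by
      intro v _
      by_cases hvo : v ∈ Vokay G
      · by_cases hp : v ∈ VbadP E G k t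
        · right; exact Finset.mem_union_left _ hp
        · left; simp [VgoodP, Finset.mem_sdiff, hvo, hp]
      · right; simp [Finset.mem_union, Finset.mem_sdiff, hvo]
    have h1 : (outN E u).card ≤ (outN E u ∩ VgoodP E G k t).card +
        ((VbadP E G k t).card + (Finset.univ \ Vokay G : Finset V).card) :=
      (card_inter_lower _ _ _ hcover).trans (Nat.add_le_add_left (Finset.card_union_le _ _) _)
    have h1R : ((outN E u).card : ℝ) ≤ ((outN E u ∩ VgoodP E G k t).card : ℝ) +
        (((VbadP E G k t).card : ℝ) + ((Finset.univ \ Vokay G : Finset V).card : ℝ)) := by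
      exact_mod_cast h1
    have hdR : ((τ₁ * k * t : ℕ) : ℝ) ≤ ((outN E u).card : ℝ) := by exact_mod_cast hdo u
    have hd5 : (10 : ℝ) ^ 12 * ((VbadP E G k t).card : ℝ) ≤ ((outN E u).card : ℝ) := by
      exact_mod_cast (hG5 u hu).1
    have hhalf : ((τ₁ * k * t : ℕ) : ℝ) / 2 ≤ ((outN E u ∩ VgoodP E G k t).card : ℝ) := by
      linarith
    refine max_le ?_ hhalf
    rcases le_or_gt ((10 : ℝ) ^ 11 * ((VbadP E G k t).card : ℝ))
      (((τ₁ * k * t : ℕ) : ℝ) / 2) with hcase | hcase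
    · linarith
    · linarith
  · -- (G8)
    intro u hu
    have hcover : ∀ v ∈ inN E u, v ∈ Vgood E G k t ∨
        v ∈ VbadP E G k t ∪ (VbadM E G k t ∪ (Finset.univ \ Vokay G)) := by
      intro v _
      by_cases hvo : v ∈ Vokay G
      · by_cases hp : v ∈ VbadP E G k t
        · right; exact Finset.mem_union_left _ hp
        · by_cases hm : v ∈ VbadM E G k t
          · right; exact Finset.mem_union_right _ (Finset.mem_union_left _ hm)
          · left
            simp [Vgood, VgoodP, VgoodM, Finset.mem_inter, Finset.mem_sdiff, hvo, hp, hm]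
      · right; simp [Finset.mem_union, Finset.mem_sdiff, hvo]
    have h1 : (inN E u).card ≤ (inN E u ∩ Vgood E G k t).card + ((VbadP E G k t).card +
        ((VbadM E G k t).card + (Finset.univ \ Vokay G : Finset V).card)) := by
      refine (card_inter_lower _ _ _ hcover).trans (Nat.add_le_add_left ?_ _)
      exact (Finset.card_union_le _ _).trans (Nat.add_le_add_left (Finset.card_union_le _ _) _)
    have h1R : ((inN E u).card : ℝ) ≤ ((inN E u ∩ Vgood E G k t).card : ℝ) +
        (((VbadP E G k t).card : ℝ) + (((VbadM E G k t).card : ℝ) +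
        ((Finset.univ \ Vokay G : Finset V).card : ℝ))) := by exact_mod_cast h1
    have hdR : ((τ₁ * k * t : ℕ) : ℝ) ≤ ((inN E u).card : ℝ) := by exact_mod_cast hdi u
    have hd5 : (10 : ℝ) ^ 12 * ((VbadM E G k t).card : ℝ) ≤ ((inN E u).card : ℝ) := by
      exact_mod_cast (hG5 u hu).2
    have hhalf : ((τ₁ * k * t : ℕ) : ℝ) / 2 ≤ ((inN E u ∩ Vgood E G k t).card : ℝ) := by
      linarith
    refine max_le ?_ hhalf
    rcases le_or_gt ((10 : ℝ) ^ 11 * ((VbadM E G k t).card : ℝ))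
      (((τ₁ * k * t : ℕ) : ℝ) / 2) with hcase | hcase
    · linarith
    · linarith
  · -- (G9)
    intro u
    have hcover : ∀ (N : Finset V), ∀ v ∈ N, v ∈ Vokay G ∨ v ∈ Finset.univ \ Vokay G := by
      intro N v _
      by_cases hvo : v ∈ Vokay G
      · left; exact hvo
      · right; simp [Finset.mem_sdiff, hvo]
    constructor
    · have h1 : (outN E u).card ≤ (outN E u ∩ Vokay G).card +
          (Finset.univ \ Vokay G : Finset V).card :=
        card_inter_lower _ _ _ (hcover _)
      have h1R : ((outN E u).card : ℝ) ≤ ((outN E u ∩ Vokay G).card : ℝ) +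
          ((Finset.univ \ Vokay G : Finset V).card : ℝ) := by exact_mod_cast h1
      have hdR : ((τ₁ * k * t : ℕ) : ℝ) ≤ ((outN E u).card : ℝ) := by exact_mod_cast hdo u
      refine max_le (by linarith) (by linarith)
    · have h1 : (inN E u).card ≤ (inN E u ∩ Vokay G).card +
          (Finset.univ \ Vokay G : Finset V).card :=
        card_inter_lower _ _ _ (hcover _)
      have h1R : ((inN E u).card : ℝ) ≤ ((inN E u ∩ Vokay G).card : ℝ) +
          ((Finset.univ \ Vokay G : Finset V).card : ℝ) := by exact_mod_cast h1
      have hdR : ((τ₁ * k * t : ℕ) : ℝ) ≤ ((inN E u).card : ℝ) := by exact_mod_cast hdi u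
      refine max_le (by linarith) (by linarith)

end TournamentPartition
end

section
/- Let T, the constants, and a gadget system satisfying (G1)–(G9) be as in the context. Then there is a subset C₁ ⊆ A₁ of size at least |A₁|/(36ρ²) such that |N^ν_okay(s) ∩ W(C₁ ∖ {α})| ≥ φ₁kt for every α ∈ C₁, every s ∈ S(α) and every ν ∈ {+,−}. -/
/-! Weight a pair of gadgets `(α, β)` by the fraction of the neighbourhoods `N^±_okay(s)`,
`s ∈ S(α)`, that `U(β)` covers. By (G1) and (G2) every row sum is at most `2ρ`. Coloring the
indices greedily with `8ρ` colors keeps the weight inside color classes at most a `1 / (8ρ)`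
fraction of the total, so in the best class, after discarding the indices whose row sum exceeds
`1 / 2`, at least `|A₁| / (16ρ)` indices survive. For a survivor `α` the other survivors cover at
most half of each neighbourhood of each `s ∈ S(α)`, and by (G9) these have at least `τ₁kt / 2`
vertices. -/

open Finset

namespace TournamentPartition

section Weights

variable {I : Type*}

lemma sum_sum_insert_insert [DecidableEq I] {M : Type*} [AddCommMonoid M] (F : I → I → M) {a : I}
    {A : Finset I} (ha : a ∉ A) :
    ∑ α ∈ insert a A, ∑ β ∈ insert a A, F α β
      = F a a + ∑ β ∈ A, (F a β + F β a) + ∑ α ∈ A, ∑ β ∈ A, F α β := by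
  simp only [sum_insert ha, sum_add_distrib]
  abel

/-- Greedy coloring: each new element takes the color it is least attached to. -/
lemma exists_coloring_mul_sum_le [DecidableEq I] (h : I → I → ℝ) (hdiag : ∀ α, h α α = 0) {m : ℕ}
    (hm : 0 < m) (A : Finset I) :
    ∃ f : I → Fin m, (m : ℝ) * ∑ α ∈ A, ∑ β ∈ A, (if f β = f α then h α β else 0)
      ≤ ∑ α ∈ A, ∑ β ∈ A, h α β := by
  induction A using Finset.induction_on with
  | empty => exact ⟨fun _ => ⟨0, hm⟩, by simp⟩
  | @insert a A ha ih =>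
    obtain ⟨f, hf⟩ := ih
    set g : Fin m → ℝ := fun j => ∑ β ∈ A, if f β = j then h a β + h β a else 0
    obtain ⟨j, -, hj⟩ := exists_min_image univ g ⟨⟨0, hm⟩, mem_univ _⟩
    have hsum_g : ∑ j', g j' = ∑ β ∈ A, (h a β + h β a) := by
      rw [sum_comm]
      exact sum_congr rfl fun β _ => by simp
    have hgj : (m : ℝ) * g j ≤ ∑ β ∈ A, (h a β + h β a) := by
      simpa [hsum_g] using card_nsmul_le_sum univ g (g j) fun j' _ => hj j' (mem_univ _)
    refine ⟨Function.update f a j, ?_⟩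
    have hupd : ∀ β ∈ A, Function.update f a j β = f β := fun β hβ =>
      Function.update_of_ne (ne_of_mem_of_not_mem hβ ha) _ _
    have hcolored : ∑ α ∈ insert a A, ∑ β ∈ insert a A,
        (if Function.update f a j β = Function.update f a j α then h α β else 0)
        = g j + ∑ α ∈ A, ∑ β ∈ A, (if f β = f α then h α β else 0) := by
      rw [sum_sum_insert_insert _ ha, if_pos rfl, hdiag, zero_add]
      congr 1
      · refine sum_congr rfl fun β hβ => ?_
        rw [hupd β hβ, Function.update_self]
        by_cases hβj : f β = j
        · simp [hβj]
        · simp [hβj, Ne.symm hβj]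
      · exact sum_congr rfl fun α hα => sum_congr rfl fun β hβ => by rw [hupd α hα, hupd β hβ]
    rw [hcolored, sum_sum_insert_insert _ ha, hdiag, zero_add, mul_add]
    linarith

lemma exists_subset_row_sum_le (h : I → I → ℝ) (hnn : ∀ α β, 0 ≤ h α β) {ε : ℝ} (hε : 0 < ε)
    (C : Finset I) :
    ∃ C' ⊆ C, (C.card : ℝ) - (∑ α ∈ C, ∑ β ∈ C, h α β) / ε ≤ C'.card ∧
      ∀ α ∈ C', ∑ β ∈ C', h α β ≤ ε := by
  set row : I → ℝ := fun α => ∑ β ∈ C, h α β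
  refine ⟨C.filter fun α => row α ≤ ε, filter_subset _ _, ?_, fun α hα => ?_⟩
  · have hbad : ((C.filter fun α => ¬ row α ≤ ε).card : ℝ) * ε ≤ ∑ α ∈ C, row α := by
      calc ((C.filter fun α => ¬ row α ≤ ε).card : ℝ) * ε
          ≤ ∑ α ∈ C.filter fun α => ¬ row α ≤ ε, row α := by
            simpa using card_nsmul_le_sum _ row ε fun α hα => (not_le.mp (mem_filter.mp hα).2).le
        _ ≤ ∑ α ∈ C, row α := sum_le_sum_of_subset_of_nonneg (filter_subset _ _)
            fun α _ _ => sum_nonneg fun β _ => hnn α β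
    have hsplit := card_filter_add_card_filter_not (s := C) (fun α => row α ≤ ε)
    rw [← le_div_iff₀ hε] at hbad
    have : (C.card : ℝ) = (C.filter fun α => row α ≤ ε).card
        + (C.filter fun α => ¬ row α ≤ ε).card := by exact_mod_cast hsplit.symm
    linarith
  · exact (sum_le_sum_of_subset_of_nonneg (filter_subset _ _) fun β _ _ => hnn α β).trans
      (mem_filter.mp hα).2

/-- Derandomized sampling: some color class of a good coloring, once its heavy rows are
discarded, does as well as a random set of density `1 / m`. -/
lemma exists_large_row_sum_le [Fintype I] [DecidableEq I] (h : I → I → ℝ)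
    (hnn : ∀ α β, 0 ≤ h α β) (hdiag : ∀ α, h α α = 0) {m : ℕ} (hm : 0 < m) {ε : ℝ}
    (hε : 0 < ε) :
    ∃ C : Finset I,
      (Fintype.card I : ℝ) / m - (∑ α, ∑ β, h α β) / (ε * m ^ 2) ≤ C.card ∧
        ∀ α ∈ C, ∑ β ∈ C, h α β ≤ ε := by
  obtain ⟨f, hf⟩ := exists_coloring_mul_sum_le h hdiag hm univ
  set T := ∑ α, ∑ β, h α β
  set colorClass : Fin m → Finset I := fun j => univ.filter fun α => f α = j
  set w : Fin m → ℝ := fun j => ∑ α ∈ colorClass j, ∑ β ∈ colorClass j, h α β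
  have hm' : (0 : ℝ) < m := by exact_mod_cast hm
  have hw : ∑ j, w j ≤ T / m := by
    have hclasses : ∑ j, w j = ∑ α, ∑ β, (if f β = f α then h α β else 0) := by
      rw [← sum_fiberwise univ f]
      refine sum_congr rfl fun j _ => sum_congr rfl fun α hα => ?_
      rw [sum_filter, (mem_filter.mp hα).2]
    rw [hclasses, le_div_iff₀ hm', mul_comm]
    exact hf
  have hcard : ∑ j, ((colorClass j).card : ℝ) = Fintype.card I := by
    exact_mod_cast
      (card_eq_sum_card_fiberwise (s := univ) (t := univ) fun α _ => mem_univ (f α)).symm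
  have hconst : (m : ℝ) * ((Fintype.card I : ℝ) / m - T / (ε * m ^ 2))
      = Fintype.card I - T / m / ε := by
    field_simp
  obtain ⟨j, -, hj⟩ := exists_le_of_sum_le (s := univ)
    (f := fun _ => (Fintype.card I : ℝ) / m - T / (ε * m ^ 2))
    (g := fun j => ((colorClass j).card : ℝ) - w j / ε) ⟨⟨0, hm⟩, mem_univ _⟩ (by
      simp only [sum_const, card_univ, Fintype.card_fin, nsmul_eq_mul, sum_sub_distrib,
        ← sum_div, hcard, hconst]
      linarith [div_le_div_of_nonneg_right hw hε.le])
  obtain ⟨C, -, hCcard, hC⟩ := exists_subset_row_sum_le h hnn hε (colorClass j)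
  exact ⟨C, hj.trans hCcard, hC⟩

end Weights

section Spread

open Function

variable {V I : Type*} [DecidableEq V]

lemma sum_card_inter_le_card [Fintype I] (U : I → Finset V) (hU : Pairwise (Disjoint on U))
    (N : Finset V) : ∑ β, (N ∩ U β).card ≤ N.card := by
  rw [← card_biUnion fun β _ γ _ hβγ => (hU hβγ).mono inter_subset_right inter_subset_right]
  exact card_le_card (biUnion_subset.mpr fun β _ => inter_subset_left)

lemma card_le_card_sdiff_biUnion_add_sum (U : I → Finset V) (N : Finset V) (C : Finset I) :
    N.card ≤ (N \ C.biUnion U).card + ∑ β ∈ C, (N ∩ U β).card := by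
  rw [← card_sdiff_add_card_inter N (C.biUnion U), inter_biUnion]
  exact Nat.add_le_add_left card_biUnion_le _

variable [DecidableEq I]

noncomputable def coverWeight (U : I → Finset V) (𝒩 : I → Finset (Finset V)) (α β : I) : ℝ :=
  if β = α then 0 else ∑ N ∈ 𝒩 α, ((N ∩ U β).card : ℝ) / N.card

lemma coverWeight_nonneg (U : I → Finset V) (𝒩 : I → Finset (Finset V)) (α β : I) :
    0 ≤ coverWeight U 𝒩 α β := by
  unfold coverWeight
  split_ifs
  exacts [le_rfl, sum_nonneg fun N _ => by positivity]

lemma sum_coverWeight_le [Fintype I] (U : I → Finset V) (hU : Pairwise (Disjoint on U))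
    (𝒩 : I → Finset (Finset V)) (α : I) : ∑ β, coverWeight U 𝒩 α β ≤ (𝒩 α).card :=
  calc ∑ β, coverWeight U 𝒩 α β ≤ ∑ β, ∑ N ∈ 𝒩 α, ((N ∩ U β).card : ℝ) / N.card :=
        sum_le_sum fun β _ => by
          unfold coverWeight
          split_ifs
          exacts [sum_nonneg fun N _ => by positivity, le_rfl]
    _ = ∑ N ∈ 𝒩 α, (∑ β, ((N ∩ U β).card : ℝ)) / N.card := by rw [sum_comm]; simp [sum_div]
    _ ≤ ∑ N ∈ 𝒩 α, (1 : ℝ) := sum_le_sum fun N _ =>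
        div_le_one_of_le₀ (by exact_mod_cast sum_card_inter_le_card U hU N) (by positivity)
    _ = (𝒩 α).card := by simp

lemma card_inter_le_mul_coverWeight (U : I → Finset V) (𝒩 : I → Finset (Finset V)) {α β : I}
    (hβα : β ≠ α) {N : Finset V} (hN : N ∈ 𝒩 α) :
    ((N ∩ U β).card : ℝ) ≤ N.card * coverWeight U 𝒩 α β := by
  rcases N.eq_empty_or_nonempty with rfl | hNne
  · simp
  calc ((N ∩ U β).card : ℝ) = N.card * (((N ∩ U β).card : ℝ) / N.card) := by
        have : (N.card : ℝ) ≠ 0 := by exact_mod_cast hNne.card_pos.ne'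
        field_simp
    _ ≤ N.card * coverWeight U 𝒩 α β := by
        rw [coverWeight, if_neg hβα]
        gcongr
        exact single_le_sum (f := fun N => ((N ∩ U β).card : ℝ) / N.card)
          (fun N _ => by positivity) hN

/-- Row sums of `coverWeight` are at most `r`, so `4 r` colors give density `1 / (8 r)`. -/
lemma exists_large_subfamily_half_le_card_sdiff [Fintype I] (U : I → Finset V)
    (hU : Pairwise (Disjoint on U)) (𝒩 : I → Finset (Finset V)) {r : ℕ} (hr : 0 < r)
    (h𝒩 : ∀ α, (𝒩 α).card ≤ r) :
    ∃ C : Finset I, (Fintype.card I : ℝ) / (8 * r) ≤ C.card ∧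
      ∀ α ∈ C, ∀ N ∈ 𝒩 α, (N.card : ℝ) / 2 ≤ (N \ (C.erase α).biUnion U).card := by
  obtain ⟨C, hCcard, hC⟩ := exists_large_row_sum_le (coverWeight U 𝒩) (coverWeight_nonneg U 𝒩)
    (fun α => if_pos rfl) (m := 4 * r) (by omega) (ε := 1 / 2) (by norm_num)
  refine ⟨C, le_trans ?_ hCcard, fun α hα N hN => ?_⟩
  · have hT : ∑ α, ∑ β, coverWeight U 𝒩 α β ≤ Fintype.card I * r := by
      simpa using sum_le_sum fun α (_ : α ∈ univ) =>
        (sum_coverWeight_le U hU 𝒩 α).trans (by exact_mod_cast h𝒩 α : ((𝒩 α).card : ℝ) ≤ r)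
    have hr' : (0 : ℝ) < r := by exact_mod_cast hr
    have : (Fintype.card I : ℝ) / (8 * r) = Fintype.card I / (4 * r : ℕ)
        - Fintype.card I * r / (1 / 2 * (4 * r : ℕ) ^ 2) := by
      push_cast
      field_simp
      ring
    rw [this]
    gcongr
  · have hsum : ∑ β ∈ C.erase α, ((N ∩ U β).card : ℝ) ≤ N.card / 2 :=
      calc ∑ β ∈ C.erase α, ((N ∩ U β).card : ℝ)
          ≤ ∑ β ∈ C.erase α, N.card * coverWeight U 𝒩 α β := sum_le_sum fun β hβ =>
            card_inter_le_mul_coverWeight U 𝒩 (ne_of_mem_erase hβ) hN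
        _ = N.card * ∑ β ∈ C, coverWeight U 𝒩 α β := by
            rw [← mul_sum, sum_erase C (f := coverWeight U 𝒩 α) (if_pos rfl)]
        _ ≤ N.card * (1 / 2) := by gcongr; exact hC α hα
        _ = N.card / 2 := by ring
    have hsplit : (N.card : ℝ) ≤ (N \ (C.erase α).biUnion U).card
        + ∑ β ∈ C.erase α, ((N ∩ U β).card : ℝ) := by
      exact_mod_cast card_le_card_sdiff_biUnion_add_sum U N (C.erase α)
    linarith

end Spread

lemma inter_Wof {V I : Type*} [Fintype V] [DecidableEq V] [DecidableEq I] (G : GadgetSystem V I)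
    (N : Finset V) (C : Finset I) : N ∩ Wof G C = N \ C.biUnion G.U := by
  ext v
  simp [Wof]

lemma phi1_mul_le_half {τ₁ k t : ℕ} {x : ℝ} (hx : ((τ₁ * k * t : ℕ) : ℝ) / 2 ≤ x) :
    phi1 τ₁ * k * t ≤ x / 2 := by
  have : phi1 τ₁ * k * t = ((τ₁ * k * t : ℕ) : ℝ) / (2 ^ 8 * 10 ^ 4) := by
    simp only [phi1, phi0, rho]
    push_cast
    ring
  rw [this]
  have : (0 : ℝ) ≤ ((τ₁ * k * t : ℕ) : ℝ) := Nat.cast_nonneg _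
  linarith

/-- Lemma 4.6. -/
theorem statement7 :
    ∃ C : ℕ, ∀ (τ₁ k t : ℕ), C ≤ τ₁ → C * τ₁ ≤ k → 2 ≤ t →
      ∀ (V : Type) [Fintype V] [DecidableEq V] (E : V → V → Prop) [DecidableRel E],
        IsTournament E → StronglyKConnected E (τ₁ * k * t) →
        ∀ G : GadgetSystem V (Fin (sigma1 * k * t)),
          GadgetHyp E G k t → GadgetHyp2 E G k t τ₁ →
          ∃ C₁ : Finset (Fin (sigma1 * k * t)),
            ((sigma1 * k * t : ℕ) : ℝ) / (36 * (rho : ℝ) ^ 2) ≤ (C₁.card : ℝ) ∧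
            ∀ α ∈ C₁, ∀ s ∈ G.S α,
              phi1 τ₁ * k * t ≤ ((NokayP E G s ∩ Wof G (C₁.erase α)).card : ℝ) ∧
              phi1 τ₁ * k * t ≤ ((NokayM E G s ∩ Wof G (C₁.erase α)).card : ℝ) := by
  refine ⟨0, fun τ₁ k t _ _ _ V _ _ E _ _ _ G hG hG' => ?_⟩
  obtain ⟨hG1, hG2, -⟩ := hG
  obtain ⟨-, -, -, hG9⟩ := hG'
  set 𝒩 : Fin (sigma1 * k * t) → Finset (Finset V) := fun α =>
    (G.S α).image (NokayP E G) ∪ (G.S α).image (NokayM E G)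
  have h𝒩 : ∀ α, (𝒩 α).card ≤ 2 * rho := fun α =>
    calc (𝒩 α).card ≤ (G.S α).card + (G.S α).card :=
          (card_union_le _ _).trans (add_le_add card_image_le card_image_le)
      _ ≤ 2 * rho := by linarith [(hG2 α).1]
  obtain ⟨C, hCcard, hC⟩ :=
    exists_large_subfamily_half_le_card_sdiff G.U hG1 𝒩 (by norm_num [rho]) h𝒩
  refine ⟨C, le_trans ?_ hCcard, fun α hα s hs => ?_⟩
  · rw [Fintype.card_fin]
    exact div_le_div_of_nonneg_left (Nat.cast_nonneg _) (by norm_num [rho]) (by norm_num [rho])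
  · simp only [inter_Wof]
    exact ⟨phi1_mul_le_half (le_max_right _ _ |>.trans (hG9 s).1) |>.trans
        (hC α hα _ (mem_union_left _ (mem_image_of_mem _ hs))),
      phi1_mul_le_half (le_max_right _ _ |>.trans (hG9 s).2) |>.trans
        (hC α hα _ (mem_union_right _ (mem_image_of_mem _ hs)))⟩

end TournamentPartition
end

section
/- Let T, the constants, and a gadget system satisfying (G1)–(G9) be as in the context, and let C₁ ⊆ A₁ satisfy |N^ν_okay(s) ∩ W(C₁ ∖ {α})| ≥ φ₁kt for every α ∈ C₁, s ∈ S(α) and ν ∈ {+,−}. Then there is a subset C₂ ⊆ C₁ of size at least |C₁|/(6^4 ρ^4) such that for every α ∈ C₂, every s ∈ S(α) and every ν ∈ {+,−}, the set N^ν_okay(s) ∩ W(C₂ ∖ {α}) contains at least φ₂kt vertices u satisfying |N^μ_good(u) ∩ W(C₂ ∖ {α})| ≥ φ₂kt for both μ ∈ {+,−}. -/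
open Finset

namespace TournamentPartition

/-!
Choose `C₂'` uniformly among the `(r + 1)`-subsets of `C₁`, where `r = ⌊|C₁| / (648 ρ⁴)⌋`, and
for `α ∈ C₂'` look at `D = C₂' ∖ {α}`, a uniform `r`-subset of `C₁ ∖ {α}`. As the gadgets `U(β)`
are disjoint, every vertex lies in `⋃_{β ∈ D} U(β)` with probability at most `r / (|C₁| - 1)`, so
by Markov's inequality a fixed set is more than half covered with probability at most
`2r / (|C₁| - 1)`. A vertex `u` is spoiled when one of its good neighbourhoods `N⁺_good(u)`,
`N⁻_good(u)` (of size at least `τ₁kt/2` by (G7), (G8)) is more than half covered; by Markov's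
inequality again, a candidate set `N^ν_okay(s) ∩ W(C₁ ∖ {α})` is mostly spoiled with probability at
most `8r / (|C₁| - 1)`. A union bound over the at most `2ρ` candidate sets shows that `α` is
unhappy with at most half of the possible `D`, so some `C₂'` has at most half of its members
unhappy. Removing them gives `C₂`, and since `W(C₂ ∖ {α}) ⊇ W(C₂' ∖ {α})`, each candidate set keeps
at least half of its vertices, each with at least `τ₁kt/4` good neighbours in both directions.
-/

section Subsets

variable {A B ι V : Type*}

/-- Markov's inequality, counted: `y / x` bounds the number of `D` bad for a fixed `u`. -/
theorem card_filter_majority_mul_le (P : Finset A) (Q : Finset B) (p : B → A → Prop)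
    [∀ u D, Decidable (p u D)] {x y : ℕ} (h : ∀ u ∈ Q, #{D ∈ P | p u D} * x ≤ y) :
    #{D ∈ P | #Q < 2 * #{u ∈ Q | p u D}} * x ≤ 2 * y := by
  set F := {D ∈ P | #Q < 2 * #{u ∈ Q | p u D}}
  have hdouble : ∑ D ∈ F, #{u ∈ Q | p u D} = ∑ u ∈ Q, #{D ∈ F | p u D} :=
    sum_card_bipartiteAbove_eq_sum_card_bipartiteBelow (fun D u => p u D)
  have hlow : #F * (#Q + 1) ≤ 2 * ∑ D ∈ F, #{u ∈ Q | p u D} := by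
    rw [mul_sum, ← smul_eq_mul]
    exact card_nsmul_le_sum _ _ _ fun D hD => (mem_filter.1 hD).2
  have hup : (∑ u ∈ Q, #{D ∈ F | p u D}) * x ≤ #Q * y := by
    rw [sum_mul, ← smul_eq_mul]
    refine sum_le_card_nsmul _ _ _ fun u hu => le_trans ?_ (h u hu)
    exact Nat.mul_le_mul_right _ (card_le_card (filter_subset_filter _ (filter_subset _ _)))
  have : #F * x * (#Q + 1) ≤ 2 * y * (#Q + 1) := by nlinarith
  exact Nat.le_of_mul_le_mul_right this (Nat.succ_pos _)

variable [DecidableEq V]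

def HalfCovered (U : ι → Finset V) (D : Finset ι) (N : Finset V) : Prop :=
  #N < 2 * #(N ∩ D.biUnion U)

instance (U : ι → Finset V) (D : Finset ι) (N : Finset V) : Decidable (HalfCovered U D N) :=
  inferInstanceAs (Decidable (_ < _))

theorem card_le_two_mul_card_sdiff_of_not_halfCovered {U : ι → Finset V} {D D' : Finset ι}
    {N : Finset V} (h : ¬ HalfCovered U D N) (hD : D' ⊆ D) :
    #N ≤ 2 * #(N \ D'.biUnion U) := by
  have hsub : #(N ∩ D'.biUnion U) ≤ #(N ∩ D.biUnion U) :=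
    card_le_card (inter_subset_inter_left (biUnion_subset_biUnion_of_subset_left U hD))
  have := card_sdiff_add_card_inter N (D'.biUnion U)
  unfold HalfCovered at h
  omega

variable [DecidableEq ι]

theorem card_filter_mem_powersetCard_mul_card {S : Finset ι} {β : ι} (hβ : β ∈ S) (n : ℕ) :
    #{D ∈ S.powersetCard n | β ∈ D} * #S = n * #(S.powersetCard n) := by
  cases n with
  | zero => simp
  | succ r =>
    have h := card_filter_powersetCard_subset {β} S (r + 1) (singleton_subset_iff.2 hβ)
      (by simp)
    simp only [singleton_subset_iff, card_singleton, add_tsub_cancel_right] at h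
    obtain ⟨s, hs⟩ : ∃ s, #S = s + 1 := ⟨#S - 1, by have := card_pos.2 ⟨β, hβ⟩; omega⟩
    rw [h, card_powersetCard, hs, Nat.add_sub_cancel, mul_comm, Nat.add_one_mul_choose_eq,
      mul_comm]

theorem card_filter_mem_and_erase_eq {S : Finset ι} {α : ι} (hα : α ∈ S) (r : ℕ)
    (q : Finset ι → Prop) [DecidablePred q] :
    #{C ∈ S.powersetCard (r + 1) | α ∈ C ∧ q (C.erase α)} =
      #{D ∈ (S.erase α).powersetCard r | q D} := by
  refine card_nbij' (·.erase α) (insert α) (fun C hC => ?_) (fun D hD => ?_)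
    (fun C hC => ?_) (fun D hD => ?_)
  · simp only [coe_filter, mem_powersetCard, Set.mem_ofPred_eq] at hC ⊢
    refine ⟨⟨erase_subset_erase α hC.1.1, ?_⟩, hC.2.2⟩
    rw [card_erase_of_mem hC.2.1, hC.1.2, add_tsub_cancel_right]
  · simp only [coe_filter, mem_powersetCard, Set.mem_ofPred_eq] at hD ⊢
    have hαD : α ∉ D := fun h => by simpa using hD.1.1 h
    refine ⟨⟨insert_subset hα (hD.1.1.trans (erase_subset α S)), ?_⟩, mem_insert_self α D, ?_⟩
    · rw [card_insert_of_notMem hαD, hD.1.2]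
    · rw [erase_insert hαD]; exact hD.2
  · simp only [coe_filter, Set.mem_ofPred_eq] at hC
    exact insert_erase hC.2.1
  · simp only [coe_filter, mem_powersetCard, Set.mem_ofPred_eq] at hD
    exact erase_insert fun h => by simpa using hD.1.1 h

/-- The deletion method, by averaging over all `(r + 1)`-subsets `C` of `S`. -/
theorem exists_subset_card_eq_le_two_mul_card_filter_not (S : Finset ι) {r : ℕ} (hr : r < #S)
    (bad : ι → Finset ι → Prop) [∀ α D, Decidable (bad α D)]
    (h : ∀ α ∈ S, 2 * #{D ∈ (S.erase α).powersetCard r | bad α D} ≤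
      #((S.erase α).powersetCard r)) :
    ∃ C ⊆ S, #C = r + 1 ∧ r + 1 ≤ 2 * #{α ∈ C | ¬ bad α (C.erase α)} := by
  set P := S.powersetCard (r + 1)
  have hdouble : ∑ C ∈ P, 2 * #{α ∈ C | bad α (C.erase α)} ≤ ∑ _C ∈ P, (r + 1) := by
    calc ∑ C ∈ P, 2 * #{α ∈ C | bad α (C.erase α)}
        = 2 * ∑ α ∈ S, #{C ∈ P | α ∈ C ∧ bad α (C.erase α)} := by
          have hswap : ∑ C ∈ P, #{α ∈ S | α ∈ C ∧ bad α (C.erase α)} =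
              ∑ α ∈ S, #{C ∈ P | α ∈ C ∧ bad α (C.erase α)} :=
            sum_card_bipartiteAbove_eq_sum_card_bipartiteBelow _
          rw [← hswap, mul_sum]
          refine sum_congr rfl fun C hC => congrArg _ (congrArg card ?_)
          have := (mem_powersetCard.1 hC).1
          ext α
          simp only [mem_filter]
          grind
      _ = 2 * ∑ α ∈ S, #{D ∈ (S.erase α).powersetCard r | bad α D} := by
          rw [sum_congr rfl fun α hα => card_filter_mem_and_erase_eq hα r (bad α)]
      _ ≤ ∑ α ∈ S, #((S.erase α).powersetCard r) := by
          rw [mul_sum]; exact sum_le_sum h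
      _ = ∑ _C ∈ P, (r + 1) := by
          obtain ⟨s, hs⟩ : ∃ s, #S = s + 1 := ⟨#S - 1, by omega⟩
          simp only [sum_const, card_powersetCard, smul_eq_mul, P]
          rw [sum_congr rfl fun α hα => by rw [card_erase_of_mem hα]]
          simp only [sum_const, smul_eq_mul, hs, add_tsub_cancel_right, Nat.add_one_mul_choose_eq]
  obtain ⟨C, hCP, hC⟩ := exists_le_of_sum_le (powersetCard_nonempty.2 hr) hdouble
  obtain ⟨hCS, hCcard⟩ := mem_powersetCard.1 hCP
  refine ⟨C, hCS, hCcard, ?_⟩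
  have := card_filter_add_card_filter_not (s := C) (fun α => bad α (C.erase α))
  omega

theorem card_filter_halfCovered_mul_le {U : ι → Finset V} {S : Finset ι}
    (hU : (S : Set ι).PairwiseDisjoint U) (N : Finset V) (n : ℕ) :
    #{D ∈ S.powersetCard n | HalfCovered U D N} * #S ≤ 2 * (n * #(S.powersetCard n)) := by
  have hcount : ∀ x ∈ N,
      #{D ∈ S.powersetCard n | x ∈ D.biUnion U} * #S ≤ n * #(S.powersetCard n) := by
    intro x _
    by_cases hx : ∃ β ∈ S, x ∈ U β
    · obtain ⟨β, hβ, hxβ⟩ := hx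
      rw [← card_filter_mem_powersetCard_mul_card hβ]
      refine Nat.mul_le_mul_right _ (card_le_card fun D hD => ?_)
      rw [mem_filter] at hD ⊢
      obtain ⟨γ, hγ, hxγ⟩ := mem_biUnion.1 hD.2
      rw [hU.elim_finset hβ ((mem_powersetCard.1 hD.1).1 hγ) x hxβ hxγ]
      exact ⟨hD.1, hγ⟩
    · rw [filter_false_of_mem fun D hD hxD => hx ?_, card_empty, zero_mul]
      · exact Nat.zero_le _
      obtain ⟨γ, hγ, hxγ⟩ := mem_biUnion.1 hxD
      exact ⟨γ, (mem_powersetCard.1 hD).1 hγ, hxγ⟩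
  have := card_filter_majority_mul_le (S.powersetCard n) N (fun x D => x ∈ D.biUnion U) hcount
  simp only [filter_mem_eq_inter] at this
  exact this

end Subsets

theorem four_mul_phi2_le (τ : ℕ) : 4 * phi2 τ ≤ τ := by
  have : (0 : ℝ) ≤ τ := Nat.cast_nonneg τ
  simp only [phi2, phi1, phi0, rho]
  ring_nf
  nlinarith

theorem two_mul_phi2_le_phi1 (τ : ℕ) : 2 * phi2 τ ≤ phi1 τ := by
  have : 0 ≤ phi1 τ := by unfold phi1 phi0; positivity
  simp only [phi2, rho]
  ring_nf
  nlinarith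

theorem thirty_two_mul_rho_mul_div_le {c : ℕ} (hc : 0 < c) :
    32 * rho * (c / (648 * rho ^ 4)) ≤ c - 1 := by
  norm_num [rho]
  omega

theorem div_le_of_div_add_one_le_two_mul {c m : ℕ} (h : c / (648 * rho ^ 4) + 1 ≤ 2 * m) :
    (c : ℝ) / (6 ^ 4 * (rho : ℝ) ^ 4) ≤ m := by
  have hlt : c < (c / (648 * rho ^ 4) + 1) * (648 * rho ^ 4) := by
    rw [add_one_mul]; exact Nat.lt_div_mul_add (by norm_num [rho])
  have : c ≤ m * (6 ^ 4 * rho ^ 4) := by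
    have := Nat.mul_le_mul_right (648 * rho ^ 4) h
    linarith
  rw [div_le_iff₀ (by norm_num [rho])]
  exact_mod_cast this

section Wof

variable {V I : Type*} [Fintype V] [DecidableEq V] {G : GadgetSystem V I} {k t : ℕ}

theorem Wof_anti [DecidableEq I] {A B : Finset I} (h : A ⊆ B) : Wof G B ⊆ Wof G A :=
  sdiff_subset_sdiff subset_rfl (biUnion_subset_biUnion_of_subset_left _ h)

theorem phi2_mul_le_card_inter_Wof {τ₁ : ℕ} {N : Finset V}
    (hN : ((τ₁ * k * t : ℕ) : ℝ) / 2 ≤ #N) {D D' : Finset I} (h : ¬ HalfCovered G.U D N)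
    (hD : D' ⊆ D) : phi2 τ₁ * k * t ≤ #(N ∩ Wof G D') := by
  have hW : N ∩ Wof G D' = N \ D'.biUnion G.U := by ext; simp [Wof]
  have hhalf : (#N : ℝ) ≤ 2 * #(N ∩ Wof G D') := by
    rw [hW]; exact_mod_cast card_le_two_mul_card_sdiff_of_not_halfCovered h hD
  have := four_mul_phi2_le τ₁
  push_cast at hN
  nlinarith [mul_nonneg (Nat.cast_nonneg (α := ℝ) k) (Nat.cast_nonneg (α := ℝ) t)]

end Wof

section Gadgets

variable {V I : Type*} [Fintype V] [DecidableEq V] [Fintype I]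
  (E : V → V → Prop) [DecidableRel E] (G : GadgetSystem V I) (k t : ℕ)

def Spoils (D : Finset I) (u : V) : Prop :=
  HalfCovered G.U D (NgoodP E G k t u) ∨ HalfCovered G.U D (NgoodM E G k t u)

instance (D : Finset I) (u : V) : Decidable (Spoils E G k t D u) :=
  inferInstanceAs (Decidable (_ ∨ _))

def MostlySpoiled (D : Finset I) (Q : Finset V) : Prop :=
  #Q < 2 * #{u ∈ Q | Spoils E G k t D u}

instance (D : Finset I) (Q : Finset V) : Decidable (MostlySpoiled E G k t D Q) :=
  inferInstanceAs (Decidable (_ < _))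

variable {E G k t}

theorem manyIn_of_not_mostlySpoiled {τ₁ : ℕ} (hG7 : CondG7 E G k t τ₁) (hG8 : CondG8 E G k t τ₁)
    {Q Q' : Finset V} (hQ : Q ⊆ Q') (hQok : Q ⊆ Vokay G) (hcard : phi1 τ₁ * k * t ≤ #Q)
    {D D' : Finset I} (hD : D' ⊆ D) (h : ¬ MostlySpoiled E G k t D Q) :
    ManyIn Q' (phi2 τ₁ * k * t) (fun u =>
      phi2 τ₁ * k * t ≤ #(NgoodP E G k t u ∩ Wof G D') ∧
      phi2 τ₁ * k * t ≤ #(NgoodM E G k t u ∩ Wof G D')) := by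
  refine ⟨{u ∈ Q | ¬ Spoils E G k t D u}, (filter_subset _ _).trans hQ, ?_, fun u hu => ?_⟩
  · have hsplit := card_filter_add_card_filter_not (s := Q) (fun u => Spoils E G k t D u)
    have hhalf : (#Q : ℝ) ≤ 2 * #{u ∈ Q | ¬ Spoils E G k t D u} := by
      unfold MostlySpoiled at h
      exact_mod_cast (by omega)
    have := two_mul_phi2_le_phi1 τ₁
    nlinarith [mul_nonneg (Nat.cast_nonneg (α := ℝ) k) (Nat.cast_nonneg (α := ℝ) t)]
  · obtain ⟨huQ, hu⟩ := mem_filter.1 hu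
    obtain ⟨hP, hM⟩ := not_or.1 hu
    exact ⟨phi2_mul_le_card_inter_Wof ((le_max_right _ _).trans (hG7 u (hQok huQ))) hP hD,
      phi2_mul_le_card_inter_Wof ((le_max_right _ _).trans (hG8 u (hQok huQ))) hM hD⟩

variable [DecidableEq I]

variable (E G k t) in
def Unhappy (C : Finset I) (α : I) (D : Finset I) : Prop :=
  ∃ s ∈ G.S α, MostlySpoiled E G k t D (NokayP E G s ∩ Wof G (C.erase α)) ∨
    MostlySpoiled E G k t D (NokayM E G s ∩ Wof G (C.erase α))

instance (C : Finset I) (α : I) (D : Finset I) : Decidable (Unhappy E G k t C α D) :=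
  inferInstanceAs (Decidable (∃ _ ∈ _, _))

theorem card_filter_mostlySpoiled_mul_le (hG1 : CondG1 G) (S : Finset I) (Q : Finset V)
    (n : ℕ) :
    #{D ∈ S.powersetCard n | MostlySpoiled E G k t D Q} * #S ≤
      8 * (n * #(S.powersetCard n)) := by
  have hU : (S : Set I).PairwiseDisjoint G.U := fun a _ b _ hab => hG1 a b hab
  have hspoil : ∀ u ∈ Q,
      #{D ∈ S.powersetCard n | Spoils E G k t D u} * #S ≤ 4 * (n * #(S.powersetCard n)) := by
    intro u _
    have hor : #{D ∈ S.powersetCard n | Spoils E G k t D u} ≤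
        #{D ∈ S.powersetCard n | HalfCovered G.U D (NgoodP E G k t u)} +
          #{D ∈ S.powersetCard n | HalfCovered G.U D (NgoodM E G k t u)} :=
      (card_le_card (filter_or _ _ _).le).trans (card_union_le _ _)
    have := card_filter_halfCovered_mul_le hU (NgoodP E G k t u) n
    have := card_filter_halfCovered_mul_le hU (NgoodM E G k t u) n
    nlinarith
  exact (card_filter_majority_mul_le _ Q _ hspoil).trans_eq (by ring)

theorem card_filter_unhappy_mul_le (hG1 : CondG1 G) (hG2 : CondG2 G k t) (C : Finset I) (α : I)
    (S : Finset I) (n : ℕ) :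
    #{D ∈ S.powersetCard n | Unhappy E G k t C α D} * #S ≤
      16 * rho * (n * #(S.powersetCard n)) := by
  set Qp := fun s => NokayP E G s ∩ Wof G (C.erase α)
  set Qm := fun s => NokayM E G s ∩ Wof G (C.erase α)
  have hunion : #{D ∈ S.powersetCard n | Unhappy E G k t C α D} ≤
      ∑ s ∈ G.S α, (#{D ∈ S.powersetCard n | MostlySpoiled E G k t D (Qp s)} +
        #{D ∈ S.powersetCard n | MostlySpoiled E G k t D (Qm s)}) := by
    refine le_trans (card_le_card fun D hD => ?_) (card_biUnion_le.trans (sum_le_sum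
      fun s _ => (card_le_card (filter_or _ _ _).le).trans (card_union_le _ _)))
    obtain ⟨hDP, s, hs, hspoil⟩ := mem_filter.1 hD
    exact mem_biUnion.2 ⟨s, hs, mem_filter.2 ⟨hDP, hspoil⟩⟩
  calc #{D ∈ S.powersetCard n | Unhappy E G k t C α D} * #S
      ≤ ∑ s ∈ G.S α, (#{D ∈ S.powersetCard n | MostlySpoiled E G k t D (Qp s)} * #S +
          #{D ∈ S.powersetCard n | MostlySpoiled E G k t D (Qm s)} * #S) := by
        simpa only [sum_mul, add_mul] using Nat.mul_le_mul_right #S hunion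
    _ ≤ ∑ _s ∈ G.S α, 16 * (n * #(S.powersetCard n)) := sum_le_sum fun s _ => by
        have := card_filter_mostlySpoiled_mul_le (E := E) (k := k) (t := t) hG1 S (Qp s) n
        have := card_filter_mostlySpoiled_mul_le (E := E) (k := k) (t := t) hG1 S (Qm s) n
        omega
    _ ≤ 16 * rho * (n * #(S.powersetCard n)) := by
        rw [sum_const, smul_eq_mul, mul_comm 16 rho, mul_assoc]
        exact Nat.mul_le_mul_right _ (hG2 α).1

theorem not_unhappy_empty (C : Finset I) (α : I) : ¬ Unhappy E G k t C α ∅ := by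
  simp [Unhappy, MostlySpoiled, Spoils, HalfCovered]

theorem two_mul_card_filter_unhappy_le (hG1 : CondG1 G) (hG2 : CondG2 G k t) (C : Finset I)
    (α : I) {S : Finset I} {n : ℕ} (hn : 32 * rho * n ≤ #S) :
    2 * #{D ∈ S.powersetCard n | Unhappy E G k t C α D} ≤ #(S.powersetCard n) := by
  rcases Nat.eq_zero_or_pos n with rfl | hn0
  · rw [powersetCard_zero, filter_singleton, if_neg (not_unhappy_empty C α)]
    simp
  have hS : 0 < #S := lt_of_lt_of_le (by unfold rho; positivity) hn
  have := card_filter_unhappy_mul_le (E := E) hG1 hG2 C α S n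
  refine le_of_mul_le_mul_right ?_ hS
  nlinarith

theorem manyIn_of_not_unhappy {τ₁ : ℕ} (hG7 : CondG7 E G k t τ₁) (hG8 : CondG8 E G k t τ₁)
    {C₁ C₂ D : Finset I} {α : I}
    (hC₁ : ∀ s ∈ G.S α,
      phi1 τ₁ * k * t ≤ #(NokayP E G s ∩ Wof G (C₁.erase α)) ∧
      phi1 τ₁ * k * t ≤ #(NokayM E G s ∩ Wof G (C₁.erase α)))
    (hC₂ : C₂ ⊆ C₁) (hD : C₂.erase α ⊆ D) (h : ¬ Unhappy E G k t C₁ α D) :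
    ∀ s ∈ G.S α,
      ManyIn (NokayP E G s ∩ Wof G (C₂.erase α)) (phi2 τ₁ * k * t) (fun u =>
        phi2 τ₁ * k * t ≤ #(NgoodP E G k t u ∩ Wof G (C₂.erase α)) ∧
        phi2 τ₁ * k * t ≤ #(NgoodM E G k t u ∩ Wof G (C₂.erase α))) ∧
      ManyIn (NokayM E G s ∩ Wof G (C₂.erase α)) (phi2 τ₁ * k * t) (fun u =>
        phi2 τ₁ * k * t ≤ #(NgoodP E G k t u ∩ Wof G (C₂.erase α)) ∧
        phi2 τ₁ * k * t ≤ #(NgoodM E G k t u ∩ Wof G (C₂.erase α))) := by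
  intro s hs
  have hW := Wof_anti (G := G) (erase_subset_erase α hC₂)
  obtain ⟨hP, hM⟩ := not_or.1 fun hspoil => h ⟨s, hs, hspoil⟩
  exact ⟨manyIn_of_not_mostlySpoiled hG7 hG8 (inter_subset_inter_left hW)
      (inter_subset_left.trans inter_subset_right) (hC₁ s hs).1 hD hP,
    manyIn_of_not_mostlySpoiled hG7 hG8 (inter_subset_inter_left hW)
      (inter_subset_left.trans inter_subset_right) (hC₁ s hs).2 hD hM⟩

end Gadgets

/-- Lemma 4.7. -/
theorem statement8 :
    ∃ C : ℕ, ∀ (τ₁ k t : ℕ), C ≤ τ₁ → C * τ₁ ≤ k → 2 ≤ t →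
      ∀ (V : Type) [Fintype V] [DecidableEq V] (E : V → V → Prop) [DecidableRel E],
        IsTournament E → StronglyKConnected E (τ₁ * k * t) →
        ∀ G : GadgetSystem V (Fin (sigma1 * k * t)),
          GadgetHyp E G k t → GadgetHyp2 E G k t τ₁ →
          ∀ C₁ : Finset (Fin (sigma1 * k * t)),
            (∀ α ∈ C₁, ∀ s ∈ G.S α,
              phi1 τ₁ * k * t ≤ ((NokayP E G s ∩ Wof G (C₁.erase α)).card : ℝ) ∧
              phi1 τ₁ * k * t ≤ ((NokayM E G s ∩ Wof G (C₁.erase α)).card : ℝ)) →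
            ∃ C₂ : Finset (Fin (sigma1 * k * t)), C₂ ⊆ C₁ ∧
              (C₁.card : ℝ) / (6 ^ 4 * (rho : ℝ) ^ 4) ≤ (C₂.card : ℝ) ∧
              ∀ α ∈ C₂, ∀ s ∈ G.S α,
                ManyIn (NokayP E G s ∩ Wof G (C₂.erase α)) (phi2 τ₁ * k * t)
                  (fun u =>
                    phi2 τ₁ * k * t ≤
                      ((NgoodP E G k t u ∩ Wof G (C₂.erase α)).card : ℝ) ∧
                    phi2 τ₁ * k * t ≤
                      ((NgoodM E G k t u ∩ Wof G (C₂.erase α)).card : ℝ)) ∧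
                ManyIn (NokayM E G s ∩ Wof G (C₂.erase α)) (phi2 τ₁ * k * t)
                  (fun u =>
                    phi2 τ₁ * k * t ≤
                      ((NgoodP E G k t u ∩ Wof G (C₂.erase α)).card : ℝ) ∧
                    phi2 τ₁ * k * t ≤
                      ((NgoodM E G k t u ∩ Wof G (C₂.erase α)).card : ℝ)) := by
  refine ⟨0, fun τ₁ k t _ _ _ V _ _ E _ _ _ G hG hG' C₁ hC₁ => ?_⟩
  obtain ⟨hG1, hG2, -, -, -⟩ := hG
  obtain ⟨-, hG7, hG8, -⟩ := hG'
  rcases C₁.eq_empty_or_nonempty with rfl | hne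
  · exact ⟨∅, subset_rfl, by simp, by simp⟩
  obtain ⟨C₀, hC₀, -, hhappy⟩ := exists_subset_card_eq_le_two_mul_card_filter_not C₁
    (r := #C₁ / (648 * rho ^ 4)) (Nat.div_lt_self hne.card_pos (by norm_num [rho]))
    (Unhappy E G k t C₁) fun α hα =>
      two_mul_card_filter_unhappy_le hG1 hG2 C₁ α
        (by rw [card_erase_of_mem hα]; exact thirty_two_mul_rho_mul_div_le hne.card_pos)
  refine ⟨{α ∈ C₀ | ¬ Unhappy E G k t C₁ α (C₀.erase α)}, (filter_subset _ _).trans hC₀,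
    div_le_of_div_add_one_le_two_mul hhappy, fun α hα => ?_⟩
  obtain ⟨hαC₀, hα⟩ := mem_filter.1 hα
  exact manyIn_of_not_unhappy hG7 hG8 (hC₁ α (hC₀ hαC₀)) ((filter_subset _ _).trans hC₀)
    (erase_subset_erase α (filter_subset _ _)) hα

end TournamentPartition
end

section
/- Let T, the constants, and a gadget system satisfying (G1)–(G9) be as in the context, and let C₂ ⊆ A₁ be such that for every α ∈ C₂, s ∈ S(α) and ν ∈ {+,−}, the set N^ν_okay(s) ∩ W(C₂ ∖ {α}) contains at least φ₂kt vertices u satisfying |N^μ_good(u) ∩ W(C₂ ∖ {α})| ≥ φ₂kt for both μ ∈ {+,−}. Then there is a subset C₃ ⊆ C₂ of size at least |C₂|/(6^4 ρ^4) such that for every α ∈ C₃, every s ∈ S(α) and every ν ∈ {+,−}: the set N^ν_okay(s) ∩ W(C₃ ∖ {α}) contains at least φ₃kt vertices u such that, for each μ ∈ {+,−}, the set N^μ_good(u) ∩ W(C₃ ∖ {α}) contains at least φ₃kt vertices v with |N⁻_good(v) ∩ W(C₃ ∖ {α})| ≥ φ₃kt. -/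
open Finset

namespace TournamentPartition

/-!
Only the innermost requirement of the conclusion, that `v` have `φ₃kt` good in-neighbours in
the window, is not inherited from the hypothesis: (G8) gives `v` many good in-neighbours, but
they may lie in gadgets `U(β)`. Sample `C` among the `m`-subsets of `C₂`, `m ≈ |C₂| / (6⁴ρ⁴/2)`,
and fix `α ∈ C`. As the `U(β)` are disjoint, a vertex leaves `W(C ∖ {α})` only if the one gadget
containing it is sampled, which happens for a fraction `(m - 1)/(|C₂| - 1) ≤ 1/(64ρ)` of the
samples containing `α`. Three rounds of Markov's inequality (a pool of at least `2φ₃kt` vertices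
rarely loses half of its members) and a union bound over the `≤ 2ρ` choices of `s` and `ν` show
that `α` fails for at most half of these samples. Hence some sample has at least `m/2` indices
that do not fail; they form `C₃`, since shrinking `C` only enlarges the windows.
-/

section Counting

variable {ι κ : Type*}

theorem ManyIn.mono {s s' : Finset κ} {m m' : ℝ} {P Q : κ → Prop} (h : ManyIn s m P)
    (hs : s ⊆ s') (hm : m' ≤ m) (hPQ : ∀ x, P x → Q x) : ManyIn s' m' Q := by
  obtain ⟨w, hw, hc, hp⟩ := h
  exact ⟨w, hw.trans hs, hm.trans hc, fun x hx => hPQ x (hp x hx)⟩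

theorem le_card_inter_of_manyIn [DecidableEq κ] {s W : Finset κ} {φ : ℝ}
    (h : ManyIn s φ (· ∈ W)) : φ ≤ #(s ∩ W) := by
  obtain ⟨s', hs', hc, hW⟩ := h
  exact hc.trans (by exact_mod_cast card_le_card (subset_inter hs' hW))

theorem card_filter_le_add_of_imp (𝒟 : Finset ι) {r p q : ι → Prop} [DecidablePred r]
    [DecidablePred p] [DecidablePred q] (h : ∀ D ∈ 𝒟, r D → p D ∨ q D) :
    (#{D ∈ 𝒟 | r D} : ℝ) ≤ #{D ∈ 𝒟 | p D} + #{D ∈ 𝒟 | q D} := by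
  classical
  have hsub : {D ∈ 𝒟 | r D} ⊆ {D ∈ 𝒟 | p D} ∪ {D ∈ 𝒟 | q D} := by
    intro D hD
    obtain ⟨hD, hr⟩ := mem_filter.mp hD
    rcases h D hD hr with hp | hq
    · exact mem_union_left _ (mem_filter.mpr ⟨hD, hp⟩)
    · exact mem_union_right _ (mem_filter.mpr ⟨hD, hq⟩)
  exact_mod_cast (card_le_card hsub).trans (card_union_le _ _)

theorem card_filter_le_sum_of_imp (𝒟 : Finset ι) (S : Finset κ) {r : ι → Prop}
    {p : κ → ι → Prop} [DecidablePred r] [∀ x, DecidablePred (p x)]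
    (h : ∀ D ∈ 𝒟, r D → ∃ x ∈ S, p x D) :
    (#{D ∈ 𝒟 | r D} : ℝ) ≤ ∑ x ∈ S, (#{D ∈ 𝒟 | p x D} : ℝ) := by
  classical
  have hsub : {D ∈ 𝒟 | r D} ⊆ S.biUnion fun x => {D ∈ 𝒟 | p x D} := by
    intro D hD
    obtain ⟨hD, hr⟩ := mem_filter.mp hD
    obtain ⟨x, hx, hp⟩ := h D hD hr
    exact mem_biUnion.mpr ⟨x, hx, mem_filter.mpr ⟨hD, hp⟩⟩
  exact_mod_cast (card_le_card hsub).trans card_biUnion_le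

open scoped Classical in
/-- Markov's inequality in counting form: for every counted `D`, at least half of `P` fails
`Q D`. -/
theorem card_filter_not_manyIn_le {𝒟 : Finset ι} {P : Finset κ} {s : ι → Finset κ}
    {Q : ι → κ → Prop} [∀ D, DecidablePred (Q D)] {φ B : ℝ} (hφ : 0 < φ) (hP : 2 * φ ≤ #P)
    (hPs : ∀ D ∈ 𝒟, P ⊆ s D) (hB : ∀ x ∈ P, (#{D ∈ 𝒟 | ¬Q D x} : ℝ) ≤ B) :
    (#{D ∈ 𝒟 | ¬ManyIn (s D) φ (Q D)} : ℝ) ≤ 2 * B := by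
  set 𝓕 := {D ∈ 𝒟 | ¬ManyIn (s D) φ (Q D)}
  have half_fails : ∀ D ∈ 𝓕, (#P : ℝ) / 2 ≤ #(P.bipartiteAbove (fun D x => ¬Q D x) D) := by
    intro D hD
    obtain ⟨hD𝒟, hfail⟩ := mem_filter.mp hD
    have hfew : (#{x ∈ P | Q D x} : ℝ) < φ := by
      by_contra! h
      exact hfail ⟨_, (filter_subset _ _).trans (hPs D hD𝒟), h, fun x hx => (mem_filter.mp hx).2⟩
    have hsplit := card_filter_add_card_filter_not (s := P) (p := Q D)
    rw [bipartiteAbove]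
    have : (#{x ∈ P | Q D x} : ℝ) + #{x ∈ P | ¬Q D x} = #P := by exact_mod_cast hsplit
    linarith
  have hbelow : ∀ x ∈ P, (#(𝓕.bipartiteBelow (fun D x => ¬Q D x) x) : ℝ) ≤ B := fun x hx =>
    le_trans (by exact_mod_cast card_le_card (filter_subset_filter _ (filter_subset _ _)))
      (hB x hx)
  have hcount := card_nsmul_le_card_nsmul _ half_fails hbelow
  rw [nsmul_eq_mul, nsmul_eq_mul] at hcount
  have hPpos : (0 : ℝ) < #P := by linarith
  nlinarith

theorem card_filter_pair_subset_mul [DecidableEq ι] {S : Finset ι} {α β : ι} (hα : α ∈ S)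
    (hβ : β ∈ S) (hne : α ≠ β) (m : ℕ) :
    #{D ∈ S.powersetCard m | {α, β} ⊆ D} * (#S * (#S - 1)) =
      m * (m - 1) * #(S.powersetCard m) := by
  have hpair : {α, β} ⊆ S := insert_subset hα (singleton_subset_iff.mpr hβ)
  rw [card_powersetCard]
  by_cases hm : 2 ≤ m
  · rw [card_filter_powersetCard_subset _ _ _ hpair (by rwa [card_pair hne]), card_pair hne]
    obtain ⟨n, hn⟩ : ∃ n, #S = n + 2 :=
      ⟨#S - 2, by have := card_le_card hpair; rw [card_pair hne] at this; omega⟩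
    obtain ⟨m, rfl⟩ : ∃ m', m = m' + 2 := ⟨m - 2, by omega⟩
    have h1 := Nat.add_one_mul_choose_eq (n + 1) (m + 1)
    have h2 := Nat.add_one_mul_choose_eq n m
    rw [hn, Nat.add_sub_cancel, Nat.add_sub_cancel]
    calc n.choose m * ((n + 2) * (n + 2 - 1)) = (n + 2) * ((n + 1) * n.choose m) := by
          rw [show n + 2 - 1 = n + 1 by omega]; ring
      _ = (m + 2) * (m + 2 - 1) * (n + 2).choose (m + 2) := by
          rw [h2, ← mul_assoc, h1, show m + 2 - 1 = m + 1 by omega]; ring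
  · have hempty : {D ∈ S.powersetCard m | {α, β} ⊆ D} = ∅ := by
      refine filter_false_of_mem fun D hD hsub => hm ?_
      rw [← (mem_powersetCard.mp hD).2, ← card_pair hne]
      exact card_le_card hsub
    interval_cases m <;> simp [hempty]

open scoped Classical in
theorem exists_mem_half_le_card_filter [DecidableEq ι] {𝒞 : Finset (Finset ι)}
    {T : Finset ι} {m : ℕ} (good : ι → Finset ι → Prop) (h𝒞 : 𝒞.Nonempty)
    (h𝒞T : ∀ C ∈ 𝒞, C ⊆ T ∧ #C = m)
    {c : ℝ} (hbad : ∀ α ∈ T, (#{C ∈ {C ∈ 𝒞 | α ∈ C} | ¬good α C} : ℝ) ≤ c)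
    (hc : #T * c ≤ m / 2 * #𝒞) :
    ∃ C ∈ 𝒞, (m : ℝ) / 2 ≤ #{α ∈ C | good α C} := by
  let bad : Finset ι → ι → Prop := fun C α => α ∈ C ∧ ¬good α C
  have hexchange : ∑ C ∈ 𝒞, (#{α ∈ C | ¬good α C} : ℝ) =
      ∑ α ∈ T, (#{C ∈ {C ∈ 𝒞 | α ∈ C} | ¬good α C} : ℝ) := by
    have hab := sum_card_bipartiteAbove_eq_sum_card_bipartiteBelow bad (s := 𝒞) (t := T)
    have habove : ∀ C ∈ 𝒞, T.bipartiteAbove bad C = {α ∈ C | ¬good α C} := fun C hC => by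
      ext α
      simp only [bipartiteAbove, bad, mem_filter]
      exact ⟨fun h => h.2, fun h => ⟨(h𝒞T C hC).1 h.1, h⟩⟩
    rw [sum_congr rfl fun C hC => congrArg card (habove C hC)] at hab
    simp only [bipartiteBelow, bad] at hab
    simp only [filter_filter]
    exact_mod_cast hab
  have hsum : ∑ C ∈ 𝒞, (#{α ∈ C | ¬good α C} : ℝ) ≤ ∑ _C ∈ 𝒞, (m : ℝ) / 2 := by
    rw [hexchange, sum_const, nsmul_eq_mul]
    calc ∑ α ∈ T, (#{C ∈ {C ∈ 𝒞 | α ∈ C} | ¬good α C} : ℝ) ≤ ∑ _α ∈ T, c := sum_le_sum hbad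
      _ = #T * c := by rw [sum_const, nsmul_eq_mul]
      _ ≤ #𝒞 * (m / 2) := by linarith
  obtain ⟨C, hC, hfew⟩ := exists_le_of_sum_le h𝒞 hsum
  refine ⟨C, hC, ?_⟩
  have hsplit : (#{α ∈ C | good α C} : ℝ) + #{α ∈ C | ¬good α C} = m := by
    rw [← (h𝒞T C hC).2]
    exact_mod_cast card_filter_add_card_filter_not _
  linarith

end Counting

section Gadgets

variable {V I : Type*} [Fintype V] [DecidableEq V]

theorem wof_anti {G : GadgetSystem V I} {C C' : Finset I} (h : C ⊆ C') : Wof G C' ⊆ Wof G C :=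
  sdiff_subset_sdiff subset_rfl (biUnion_subset_biUnion_of_subset_left _ h)

theorem card_filter_not_mem_wof_erase_le {G : GadgetSystem V I} [DecidableEq I]
    (hG1 : CondG1 G) {C₂ : Finset I} {α : I}
    (hα : α ∈ C₂) (m : ℕ) (y : V) :
    (#{C ∈ {C ∈ C₂.powersetCard m | α ∈ C} | y ∉ Wof G (C.erase α)} : ℝ) ≤
      (m * (m - 1) : ℕ) / (#C₂ * (#C₂ - 1) : ℕ) * #(C₂.powersetCard m) := by
  have hWof : ∀ C : Finset I, y ∉ Wof G C ↔ ∃ β ∈ C, y ∈ G.U β := by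
    intro C
    simp [Wof]
  by_cases hy : ∃ β ∈ C₂.erase α, y ∈ G.U β
  · obtain ⟨β, hβ, hyβ⟩ := hy
    obtain ⟨hβα, hβ⟩ := mem_erase.mp hβ
    have hsub : {C ∈ {C ∈ C₂.powersetCard m | α ∈ C} | y ∉ Wof G (C.erase α)} ⊆
        {C ∈ C₂.powersetCard m | {α, β} ⊆ C} := by
      intro C hC
      simp only [mem_filter, hWof, mem_erase] at hC ⊢
      obtain ⟨⟨hC, hαC⟩, γ, ⟨-, hγC⟩, hyγ⟩ := hC
      obtain rfl : γ = β := by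
        by_contra hγβ
        exact disjoint_left.mp (hG1 γ β hγβ) hyγ hyβ
      exact ⟨hC, insert_subset hαC (singleton_subset_iff.mpr hγC)⟩
    have hcount := card_filter_pair_subset_mul hα hβ (Ne.symm hβα) m
    have hN : 0 < #C₂ * (#C₂ - 1) := by
      have := card_le_card (insert_subset hα (singleton_subset_iff.mpr hβ))
      rw [card_pair (Ne.symm hβα)] at this
      exact Nat.mul_pos (by omega) (by omega)
    rw [div_mul_eq_mul_div, le_div_iff₀ (by exact_mod_cast hN)]
    exact_mod_cast (Nat.mul_le_mul_right _ (card_le_card hsub)).trans hcount.le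
  · rw [filter_false_of_mem]
    · simp only [card_empty, CharP.cast_eq_zero]
      positivity
    · intro C hC hyC
      obtain ⟨β, hβ, hyβ⟩ := (hWof _).mp hyC
      exact hy ⟨β, erase_subset_erase α (mem_powersetCard.mp (mem_filter.mp hC).1).1 hβ, hyβ⟩

variable [Fintype I] (E : V → V → Prop) [DecidableRel E] (G : GadgetSystem V I) (k t : ℕ)

def IsRich (φ : ℝ) (W : Finset V) (v : V) : Prop :=
  φ ≤ #(NgoodM E G k t v ∩ W)

def HasRichNbrs (φ : ℝ) (W : Finset V) (u : V) : Prop :=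
  ManyIn (NgoodP E G k t u ∩ W) φ (IsRich E G k t φ W) ∧
    ManyIn (NgoodM E G k t u ∩ W) φ (IsRich E G k t φ W)

def HasGoodNbrs (φ : ℝ) (W : Finset V) (u : V) : Prop :=
  φ ≤ #(NgoodP E G k t u ∩ W) ∧ φ ≤ #(NgoodM E G k t u ∩ W)

def HasOkayNbrs (W : Finset V) (φ : ℝ) (P : V → Prop) (s : V) : Prop :=
  ManyIn (NokayP E G s ∩ W) φ P ∧ ManyIn (NokayM E G s ∩ W) φ P

def GadgetHasOkayNbrs (W : Finset V) (φ : ℝ) (P : V → Prop) (α : I) : Prop :=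
  ∀ s ∈ G.S α, HasOkayNbrs E G W φ P s

variable {E G k t}

theorem mem_vokay_of_mem_ngoodP {u v : V} (h : v ∈ NgoodP E G k t u) : v ∈ Vokay G :=
  (mem_sdiff.mp (mem_inter.mp h).2).1

theorem mem_vokay_of_mem_ngoodM {u v : V} (h : v ∈ NgoodM E G k t u) : v ∈ Vokay G :=
  (mem_sdiff.mp (mem_inter.mp (mem_inter.mp h).2).1).1

section Monotone

variable {φ : ℝ} {W W' : Finset V}

theorem IsRich.mono {v : V} (h : IsRich E G k t φ W v) (hW : W ⊆ W') :
    IsRich E G k t φ W' v :=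
  h.trans (by gcongr)

theorem HasRichNbrs.mono {u : V} (h : HasRichNbrs E G k t φ W u) (hW : W ⊆ W') :
    HasRichNbrs E G k t φ W' u :=
  ⟨h.1.mono (by gcongr) le_rfl fun _ hv => hv.mono hW,
    h.2.mono (by gcongr) le_rfl fun _ hv => hv.mono hW⟩

theorem GadgetHasOkayNbrs.mono {P Q : V → Prop} {α : I} (h : GadgetHasOkayNbrs E G W φ P α)
    (hW : W ⊆ W') (hPQ : ∀ u, P u → Q u) : GadgetHasOkayNbrs E G W' φ Q α := fun s hs =>
  ⟨(h s hs).1.mono (by gcongr) le_rfl hPQ, (h s hs).2.mono (by gcongr) le_rfl hPQ⟩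

end Monotone

end Gadgets

section Levels

variable {V I ι : Type*} [Fintype V] [DecidableEq V] [Fintype I] {E : V → V → Prop}
  [DecidableRel E] {G : GadgetSystem V I} {k t : ℕ} {𝒟 : Finset ι} {w : ι → Finset V}
  {W₀ : Finset V} {φ φ₂ B : ℝ}

open scoped Classical in
theorem card_filter_not_isRich_le (hφ : 0 < φ)
    (hw : ∀ y, (#{D ∈ 𝒟 | y ∉ w D} : ℝ) ≤ B) {v : V} (hv : 2 * φ ≤ #(NgoodM E G k t v)) :
    (#{D ∈ 𝒟 | ¬IsRich E G k t φ (w D) v} : ℝ) ≤ 2 * B := by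
  refine le_trans ?_ (card_filter_not_manyIn_le (s := fun _ => NgoodM E G k t v)
    (Q := fun D y => y ∈ w D) hφ hv (fun _ _ => subset_rfl) fun y _ => hw y)
  refine Nat.cast_le.mpr (card_le_card fun D hD => ?_)
  simp only [mem_filter] at hD ⊢
  exact ⟨hD.1, fun hmany => hD.2 (le_card_inter_of_manyIn hmany)⟩

open scoped Classical in
theorem card_filter_not_hasRichNbrs_le (hφ : 0 < φ) (hφ₂ : 2 * φ ≤ φ₂)
    (hdeg : ∀ v ∈ Vokay G, 2 * φ ≤ #(NgoodM E G k t v)) (hW₀ : ∀ D ∈ 𝒟, W₀ ⊆ w D)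
    (hw : ∀ y, (#{D ∈ 𝒟 | y ∉ w D} : ℝ) ≤ B) {u : V} (hu : HasGoodNbrs E G k t φ₂ W₀ u) :
    (#{D ∈ 𝒟 | ¬HasRichNbrs E G k t φ (w D) u} : ℝ) ≤ 8 * B := by
  have hrich : ∀ v ∈ Vokay G, (#{D ∈ 𝒟 | ¬IsRich E G k t φ (w D) v} : ℝ) ≤ 2 * B :=
    fun v hv => card_filter_not_isRich_le hφ hw (hdeg v hv)
  have hout := card_filter_not_manyIn_le (s := fun D => NgoodP E G k t u ∩ w D) hφ
    (hφ₂.trans hu.1) (fun D hD => inter_subset_inter_left (hW₀ D hD))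
    fun v hv => hrich v (mem_vokay_of_mem_ngoodP (mem_inter.mp hv).1)
  have hin := card_filter_not_manyIn_le (s := fun D => NgoodM E G k t u ∩ w D) hφ
    (hφ₂.trans hu.2) (fun D hD => inter_subset_inter_left (hW₀ D hD))
    fun v hv => hrich v (mem_vokay_of_mem_ngoodM (mem_inter.mp hv).1)
  have hsplit := card_filter_le_add_of_imp 𝒟
    (p := fun D => ¬ManyIn (NgoodP E G k t u ∩ w D) φ (IsRich E G k t φ (w D)))
    (q := fun D => ¬ManyIn (NgoodM E G k t u ∩ w D) φ (IsRich E G k t φ (w D)))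
    (r := fun D => ¬HasRichNbrs E G k t φ (w D) u) fun D _ => not_and_or.mp
  linarith

open scoped Classical in
theorem card_filter_not_manyIn_hasRichNbrs_le (hφ : 0 < φ) (hφ₂ : 2 * φ ≤ φ₂)
    (hdeg : ∀ v ∈ Vokay G, 2 * φ ≤ #(NgoodM E G k t v)) (hW₀ : ∀ D ∈ 𝒟, W₀ ⊆ w D)
    (hw : ∀ y, (#{D ∈ 𝒟 | y ∉ w D} : ℝ) ≤ B) {X : Finset V}
    (hX : ManyIn (X ∩ W₀) φ₂ (HasGoodNbrs E G k t φ₂ W₀)) :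
    (#{D ∈ 𝒟 | ¬ManyIn (X ∩ w D) φ (HasRichNbrs E G k t φ (w D))} : ℝ) ≤ 16 * B := by
  obtain ⟨A, hA, hAcard, hAgood⟩ := hX
  have := card_filter_not_manyIn_le (P := A) (s := fun D => X ∩ w D)
    (Q := fun D => HasRichNbrs E G k t φ (w D)) hφ (hφ₂.trans hAcard)
    (fun D hD => hA.trans (inter_subset_inter_left (hW₀ D hD)))
    fun u hu => card_filter_not_hasRichNbrs_le hφ hφ₂ hdeg hW₀ hw (hAgood u hu)
  linarith

open scoped Classical in
theorem card_filter_not_hasOkayNbrs_le (hφ : 0 < φ) (hφ₂ : 2 * φ ≤ φ₂)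
    (hdeg : ∀ v ∈ Vokay G, 2 * φ ≤ #(NgoodM E G k t v)) (hW₀ : ∀ D ∈ 𝒟, W₀ ⊆ w D)
    (hw : ∀ y, (#{D ∈ 𝒟 | y ∉ w D} : ℝ) ≤ B) {s : V}
    (hs : HasOkayNbrs E G W₀ φ₂ (HasGoodNbrs E G k t φ₂ W₀) s) :
    (#{D ∈ 𝒟 | ¬HasOkayNbrs E G (w D) φ (HasRichNbrs E G k t φ (w D)) s} : ℝ) ≤ 32 * B := by
  have hout := card_filter_not_manyIn_hasRichNbrs_le hφ hφ₂ hdeg hW₀ hw hs.1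
  have hin := card_filter_not_manyIn_hasRichNbrs_le hφ hφ₂ hdeg hW₀ hw hs.2
  have hsplit := card_filter_le_add_of_imp 𝒟
    (p := fun D => ¬ManyIn (NokayP E G s ∩ w D) φ (HasRichNbrs E G k t φ (w D)))
    (q := fun D => ¬ManyIn (NokayM E G s ∩ w D) φ (HasRichNbrs E G k t φ (w D)))
    (r := fun D => ¬HasOkayNbrs E G (w D) φ (HasRichNbrs E G k t φ (w D)) s)
    fun D _ => not_and_or.mp
  linarith

open scoped Classical in
theorem card_filter_not_gadgetHasOkayNbrs_le (hφ : 0 < φ) (hφ₂ : 2 * φ ≤ φ₂)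
    (hdeg : ∀ v ∈ Vokay G, 2 * φ ≤ #(NgoodM E G k t v)) (hW₀ : ∀ D ∈ 𝒟, W₀ ⊆ w D)
    (hw : ∀ y, (#{D ∈ 𝒟 | y ∉ w D} : ℝ) ≤ B) {α : I} (hS : #(G.S α) ≤ rho)
    (hα : GadgetHasOkayNbrs E G W₀ φ₂ (HasGoodNbrs E G k t φ₂ W₀) α) :
    (#{D ∈ 𝒟 | ¬GadgetHasOkayNbrs E G (w D) φ (HasRichNbrs E G k t φ (w D)) α} : ℝ) ≤
      32 * rho * B := by
  have hB : 0 ≤ B := (Nat.cast_nonneg _).trans (hw (G.sp α))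
  calc (#{D ∈ 𝒟 | ¬GadgetHasOkayNbrs E G (w D) φ (HasRichNbrs E G k t φ (w D)) α} : ℝ)
      ≤ ∑ s ∈ G.S α, (#{D ∈ 𝒟 | ¬HasOkayNbrs E G (w D) φ (HasRichNbrs E G k t φ (w D)) s} : ℝ) :=
        card_filter_le_sum_of_imp 𝒟 (G.S α) fun D _ hD => by
          simpa only [GadgetHasOkayNbrs, not_forall, exists_prop] using hD
    _ ≤ ∑ _s ∈ G.S α, 32 * B :=
        sum_le_sum fun s hs => card_filter_not_hasOkayNbrs_le hφ hφ₂ hdeg hW₀ hw (hα s hs)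
    _ ≤ 32 * rho * B := by
        rw [sum_const, nsmul_eq_mul]
        have : (#(G.S α) : ℝ) ≤ rho := by exact_mod_cast hS
        nlinarith

end Levels


theorem exists_sample_size (N : ℕ) :
    ∃ m ≤ N, (N : ℝ) / (6 ^ 4 * rho ^ 4) ≤ m / 2 ∧
      N * (32 * rho * ((m * (m - 1) : ℕ) / (N * (N - 1) : ℕ))) ≤ (m : ℝ) / 2 := by
  -- `m = ⌈N / L⌉` with `L = 6⁴ρ⁴ / 2`
  obtain ⟨m, hm⟩ : ∃ m, m = (N + 6479999999999999999) / 6480000000000000000 := ⟨_, rfl⟩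
  refine ⟨m, by omega, ?_, ?_⟩
  · have h : (N : ℝ) ≤ 6480000000000000000 * m := by exact_mod_cast (by omega : N ≤ _ * m)
    rw [div_le_div_iff₀ (by norm_num [rho]) two_pos]
    norm_num [rho]
    linarith
  · rcases Nat.lt_or_ge N 2 with hN | hN
    · obtain rfl | rfl : m = 0 ∨ m = 1 := by omega
      all_goals simp
    · have hm1 : 1 ≤ m := by omega
      have key : (64 * rho * (m - 1) : ℕ) ≤ N - 1 := by norm_num [rho]; omega
      have hNR : (2 : ℝ) ≤ N := by exact_mod_cast hN
      have keyR : 64 * (rho : ℝ) * (m - 1) ≤ N - 1 := by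
        have := (Nat.cast_le (α := ℝ)).mpr key
        push_cast [Nat.cast_sub hm1, Nat.cast_sub (by omega : 1 ≤ N)] at this
        exact this
      push_cast [Nat.cast_sub hm1, Nat.cast_sub (by omega : 1 ≤ N)]
      rw [mul_div_assoc', mul_div_assoc', div_le_div_iff₀ (by nlinarith) two_pos]
      have hm0 : (0 : ℝ) ≤ m := by positivity
      nlinarith [mul_le_mul_of_nonneg_left keyR (mul_nonneg hm0 (by linarith : (0:ℝ) ≤ N))]

theorem exists_large_subset_gadgetHasOkayNbrs {V I : Type*} [Fintype V] [DecidableEq V]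
    [Fintype I] [DecidableEq I] {E : V → V → Prop} [DecidableRel E] {G : GadgetSystem V I}
    {k t : ℕ} {φ φ₂ : ℝ} (hG1 : CondG1 G) (hS : ∀ α, #(G.S α) ≤ rho) (hφ : 0 < φ)
    (hφ₂ : 2 * φ ≤ φ₂) (hdeg : ∀ v ∈ Vokay G, 2 * φ ≤ #(NgoodM E G k t v)) (C₂ : Finset I)
    (hC₂ : ∀ α ∈ C₂, GadgetHasOkayNbrs E G (Wof G (C₂.erase α)) φ₂
      (HasGoodNbrs E G k t φ₂ (Wof G (C₂.erase α))) α) :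
    ∃ C₃ ⊆ C₂, (#C₂ : ℝ) / (6 ^ 4 * rho ^ 4) ≤ #C₃ ∧ ∀ α ∈ C₃,
      GadgetHasOkayNbrs E G (Wof G (C₃.erase α)) φ (HasRichNbrs E G k t φ (Wof G (C₃.erase α)))
        α := by
  classical
  obtain ⟨m, hmN, hsize, hsparse⟩ := exists_sample_size #C₂
  let good : I → Finset I → Prop := fun α C =>
    GadgetHasOkayNbrs E G (Wof G (C.erase α)) φ (HasRichNbrs E G k t φ (Wof G (C.erase α))) α
  set q : ℝ := (m * (m - 1) : ℕ) / (#C₂ * (#C₂ - 1) : ℕ)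
  obtain ⟨C, hC, hhalf⟩ := exists_mem_half_le_card_filter good
    (powersetCard_nonempty.mpr (by simpa using hmN)) (fun C hC => mem_powersetCard.mp hC)
    (c := 32 * rho * (q * #(C₂.powersetCard m)))
    (fun α hα => card_filter_not_gadgetHasOkayNbrs_le hφ hφ₂ hdeg
      (fun C hC => wof_anti (erase_subset_erase α (mem_powersetCard.mp (mem_filter.mp hC).1).1))
      (card_filter_not_mem_wof_erase_le hG1 hα m) (hS α) (hC₂ α hα))
    (by nlinarith [Nat.cast_nonneg (α := ℝ) #(C₂.powersetCard m)])
  refine ⟨{α ∈ C | good α C}, (filter_subset _ _).trans (mem_powersetCard.mp hC).1,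
    hsize.trans hhalf, fun α hα => ?_⟩
  have hW : Wof G (C.erase α) ⊆ Wof G ({α ∈ C | good α C}.erase α) :=
    wof_anti (erase_subset_erase α (filter_subset _ _))
  exact (mem_filter.mp hα).2.mono hW fun u hu => hu.mono hW

theorem phi3_pos {τ : ℕ} (hτ : 0 < τ) : 0 < phi3 τ := by
  unfold phi3 phi2 phi1 phi0
  norm_num [rho]
  exact hτ

theorem two_mul_phi3_le_phi2 (τ : ℕ) : 2 * phi3 τ ≤ phi2 τ := by
  have : 0 ≤ phi2 τ := by unfold phi2 phi1 phi0; positivity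
  unfold phi3
  rw [← mul_div_assoc, div_le_iff₀ (by norm_num [rho])]
  norm_num [rho]
  nlinarith

theorem four_mul_phi3_le (τ : ℕ) : 4 * phi3 τ ≤ τ := by
  have : (0 : ℝ) ≤ τ := by positivity
  unfold phi3 phi2 phi1 phi0
  norm_num [rho]
  field_simp
  nlinarith

/-- Lemma 4.8. -/
theorem statement9 :
    ∃ C : ℕ, ∀ (τ₁ k t : ℕ), C ≤ τ₁ → C * τ₁ ≤ k → 2 ≤ t →
      ∀ (V : Type) [Fintype V] [DecidableEq V] (E : V → V → Prop) [DecidableRel E],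
        IsTournament E → StronglyKConnected E (τ₁ * k * t) →
        ∀ G : GadgetSystem V (Fin (sigma1 * k * t)),
          GadgetHyp E G k t → GadgetHyp2 E G k t τ₁ →
          ∀ C₂ : Finset (Fin (sigma1 * k * t)),
            (∀ α ∈ C₂, ∀ s ∈ G.S α,
              ManyIn (NokayP E G s ∩ Wof G (C₂.erase α)) (phi2 τ₁ * k * t)
                (fun u =>
                  phi2 τ₁ * k * t ≤
                    ((NgoodP E G k t u ∩ Wof G (C₂.erase α)).card : ℝ) ∧
                  phi2 τ₁ * k * t ≤
                    ((NgoodM E G k t u ∩ Wof G (C₂.erase α)).card : ℝ)) ∧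
              ManyIn (NokayM E G s ∩ Wof G (C₂.erase α)) (phi2 τ₁ * k * t)
                (fun u =>
                  phi2 τ₁ * k * t ≤
                    ((NgoodP E G k t u ∩ Wof G (C₂.erase α)).card : ℝ) ∧
                  phi2 τ₁ * k * t ≤
                    ((NgoodM E G k t u ∩ Wof G (C₂.erase α)).card : ℝ))) →
            ∃ C₃ : Finset (Fin (sigma1 * k * t)), C₃ ⊆ C₂ ∧
              (C₂.card : ℝ) / (6 ^ 4 * (rho : ℝ) ^ 4) ≤ (C₃.card : ℝ) ∧
              ∀ α ∈ C₃, ∀ s ∈ G.S α,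
                ManyIn (NokayP E G s ∩ Wof G (C₃.erase α)) (phi3 τ₁ * k * t)
                  (fun u =>
                    ManyIn (NgoodP E G k t u ∩ Wof G (C₃.erase α)) (phi3 τ₁ * k * t)
                      (fun v => phi3 τ₁ * k * t ≤
                        ((NgoodM E G k t v ∩ Wof G (C₃.erase α)).card : ℝ)) ∧
                    ManyIn (NgoodM E G k t u ∩ Wof G (C₃.erase α)) (phi3 τ₁ * k * t)
                      (fun v => phi3 τ₁ * k * t ≤
                        ((NgoodM E G k t v ∩ Wof G (C₃.erase α)).card : ℝ))) ∧
                ManyIn (NokayM E G s ∩ Wof G (C₃.erase α)) (phi3 τ₁ * k * t)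
                  (fun u =>
                    ManyIn (NgoodP E G k t u ∩ Wof G (C₃.erase α)) (phi3 τ₁ * k * t)
                      (fun v => phi3 τ₁ * k * t ≤
                        ((NgoodM E G k t v ∩ Wof G (C₃.erase α)).card : ℝ)) ∧
                    ManyIn (NgoodM E G k t u ∩ Wof G (C₃.erase α)) (phi3 τ₁ * k * t)
                      (fun v => phi3 τ₁ * k * t ≤
                        ((NgoodM E G k t v ∩ Wof G (C₃.erase α)).card : ℝ))) := by
  refine ⟨1, fun τ₁ k t hτ₁ hk ht V _ _ E _ _ _ G hG hG2 C₂ hC₂ => ?_⟩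
  have hkt : (0 : ℝ) < k * t := by
    have : 0 < k := by nlinarith
    positivity
  have hφ : 0 < phi3 τ₁ * k * t := by
    rw [mul_assoc]
    exact mul_pos (phi3_pos hτ₁) hkt
  have hφ₂ : 2 * (phi3 τ₁ * k * t) ≤ phi2 τ₁ * k * t := by
    nlinarith [two_mul_phi3_le_phi2 τ₁]
  have hdeg : ∀ v ∈ Vokay G, 2 * (phi3 τ₁ * k * t) ≤ #(NgoodM E G k t v) := fun v hv =>
    calc 2 * (phi3 τ₁ * k * t) ≤ ((τ₁ * k * t : ℕ) : ℝ) / 2 := by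
          push_cast
          nlinarith [four_mul_phi3_le τ₁]
      _ ≤ #(NgoodM E G k t v) := (le_max_right _ _).trans (hG2.2.2.1 v hv)
  exact exists_large_subset_gadgetHasOkayNbrs hG.1 (fun α => (hG.2.1 α).1) hφ hφ₂ hdeg C₂ hC₂

end TournamentPartition
end
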